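/- arXiv:2208.08260 — 7 statements merged into one kernel-verified Lean document; each statement's English description precedes it below -/
import Mathlib

section
/- Let t0 > 0 and let z : [t0, ∞) → H be a continuously differentiable solution of the perturbed steepest descent equation ż(t) + ∇f(z(t)) = g(t) for all t ≥ t0, where the perturbation g : [t0, ∞) → H satisfies ∫_{t0}^∞ ‖g(t)‖ dt < ∞ and ∫_{t0}^∞ t‖g(t)‖² dt < ∞. Then the following integral estimates hold: ∫_{t0}^∞ t‖ż(t)‖² dt < ∞, ∫_{t0}^∞ t‖∇f(z(t))‖² dt < ∞, and ∫_{t0}^∞ (f(z(t)) − inf_H f) dt < ∞. -/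
open MeasureTheory Filter Set
open scoped Topology RealInnerProductSpace

/-!
Fix a minimizer `x` of `f`. Convexity of `f` turns the equation `z' = g - ∇f(z)` into
`⟪z - x, z'⟫ ≤ ‖g‖ ‖z - x‖ - (f(z) - min f)`. Hence `√(1 + ‖z - x‖²)` grows at rate at most `‖g‖`,
so the trajectory is bounded, say by `R`; then `‖z - x‖² / 2` decreases up to the integrable error
`R ‖g‖` while dissipating `f(z) - min f`, which is therefore integrable. For the weighted
estimates, `2t (f(z) - min f)` has derivative `2 (f(z) - min f) + 2t ⟪g - z', z'⟫`, and
`2 ⟪g - z', z'⟫ ≤ ‖g‖² - ‖z'‖²` makes `t ‖z'‖²` integrable; finally `∇f(z) = g - z'`.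
-/

theorem ConvexOn.add_fderiv_sub_le {E : Type*} [NormedAddCommGroup E] [NormedSpace ℝ E]
    {s : Set E} {f : E → ℝ} {f' : E →L[ℝ] ℝ} {x y : E} (hf : ConvexOn ℝ s f) (hx : x ∈ s)
    (hy : y ∈ s) (hf' : HasFDerivAt f f' x) : f x + f' (y - x) ≤ f y := by
  set ℓ : ℝ →ᵃ[ℝ] E := AffineMap.lineMap x y
  have hderiv : HasDerivAt (f ∘ ℓ) (f' (y - x)) 0 :=
    hf'.comp_hasDerivAt_of_eq 0 AffineMap.hasDerivAt_lineMap
      (AffineMap.lineMap_apply_zero x y).symm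
  have hslope := (hf.comp_affineMap ℓ).le_slope_of_hasDerivAt (by simpa [ℓ]) (by simpa [ℓ])
    one_pos hderiv
  simp only [map_sub, slope_def_field, Function.comp_apply, AffineMap.lineMap_apply_one,
    AffineMap.lineMap_apply_zero, sub_zero, div_one, tsub_le_iff_right, ℓ] at hslope
  rw [map_sub]
  linarith

theorem sub_le_integral_of_hasDerivAt_le {φ φ' w : ℝ → ℝ} {a b : ℝ} (hab : a ≤ b)
    (hφ : ∀ t ∈ Icc a b, HasDerivAt φ (φ' t) t) (hw : IntegrableOn w (Icc a b))
    (hle : ∀ t ∈ Ioo a b, φ' t ≤ w t) : φ b - φ a ≤ ∫ t in a..b, w t :=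
  intervalIntegral.sub_le_integral_of_hasDeriv_right_of_le hab
    (fun t ht => (hφ t ht).continuousAt.continuousWithinAt)
    (fun t ht => (hφ t (Ioo_subset_Icc_self ht)).hasDerivWithinAt) hw hle

theorem intervalIntegral_le_setIntegral_Ici {w : ℝ → ℝ} {a b : ℝ} (hab : a ≤ b)
    (hw : IntegrableOn w (Ici a)) (hw0 : ∀ t ∈ Ici a, 0 ≤ w t) :
    ∫ t in a..b, w t ≤ ∫ t in Ici a, w t := by
  rw [intervalIntegral.integral_of_le hab]
  exact setIntegral_mono_set hw ((ae_restrict_iff' measurableSet_Ici).2 (.of_forall hw0))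
    (Ioc_subset_Icc_self.trans Icc_subset_Ici_self).eventuallyLE

theorem exists_norm_le_of_inner_deriv_le {E : Type*} [NormedAddCommGroup E]
    [InnerProductSpace ℝ E] {z z' : ℝ → E} {b : ℝ → ℝ} {a : ℝ}
    (hz : ∀ t ∈ Ici a, HasDerivAt z (z' t) t) (hb : IntegrableOn b (Ici a))
    (hle : ∀ t ∈ Ici a, ⟪z t, z' t⟫ ≤ b t * ‖z t‖) :
    ∃ R, ∀ t ∈ Ici a, ‖z t‖ ≤ R := by
  set ψ : ℝ → ℝ := fun t => √(1 + ‖z t‖ ^ 2)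
  have hψpos : ∀ t, 0 < ψ t := fun t => Real.sqrt_pos.2 (by positivity)
  have hnorm_le : ∀ t, ‖z t‖ ≤ ψ t := fun t =>
    Real.le_sqrt_of_sq_le (by linarith)
  have hψ : ∀ t ∈ Ici a, HasDerivAt ψ (2 * ⟪z t, z' t⟫ / (2 * ψ t)) t := fun t ht =>
    ((hz t ht).norm_sq.const_add 1).sqrt (by positivity)
  refine ⟨ψ a + ∫ t in Ici a, |b t|, fun T hT => ?_⟩
  have hdiff : ψ T - ψ a ≤ ∫ t in a..T, |b t| :=
    sub_le_integral_of_hasDerivAt_le hT (fun t ht => hψ t ht.1)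
      (IntegrableOn.mono_set hb.abs Icc_subset_Ici_self) fun t ht => by
        rw [mul_div_mul_left _ _ two_ne_zero, div_le_iff₀ (hψpos t)]
        calc ⟪z t, z' t⟫ ≤ b t * ‖z t‖ := hle t (Ioo_subset_Icc_self ht).1
          _ ≤ |b t| * ψ t := mul_le_mul (le_abs_self _) (hnorm_le t) (norm_nonneg _) (abs_nonneg _)
  linarith [hnorm_le T, intervalIntegral_le_setIntegral_Ici hT hb.abs fun t _ => abs_nonneg (b t)]

theorem integrableOn_Ici_of_hasDerivAt_add_le {φ φ' v w : ℝ → ℝ} {a : ℝ}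
    (hφ : ∀ t ∈ Ici a, HasDerivAt φ (φ' t) t) (hφ0 : ∀ t ∈ Ici a, 0 ≤ φ t)
    (hv : ContinuousOn v (Ici a)) (hv0 : ∀ t ∈ Ici a, 0 ≤ v t)
    (hw : IntegrableOn w (Ici a)) (hw0 : ∀ t ∈ Ici a, 0 ≤ w t)
    (hle : ∀ t ∈ Ioi a, φ' t + v t ≤ w t) : IntegrableOn v (Ici a) := by
  have hvI : ∀ b, IntegrableOn v (Icc a b) := fun b =>
    (hv.mono Icc_subset_Ici_self).integrableOn_compact isCompact_Icc
  rw [integrableOn_Ici_iff_integrableOn_Ioi]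
  refine integrableOn_Ioi_of_intervalIntegral_norm_bounded (φ a + ∫ t in Ici a, w t) a
    (fun b => (hvI b).mono_set Ioc_subset_Icc_self) tendsto_id ?_
  filter_upwards [eventually_ge_atTop a] with b hab
  have hwI : IntegrableOn w (Icc a b) := hw.mono_set Icc_subset_Ici_self
  have hsub : φ b - φ a ≤ ∫ t in a..b, (w t - v t) :=
    sub_le_integral_of_hasDerivAt_le hab (fun t ht => hφ t ht.1) (hwI.sub (hvI b))
      (fun t ht => le_sub_iff_add_le.2 (hle t ht.1))
  rw [intervalIntegral.integral_sub ((intervalIntegrable_iff_integrableOn_Icc_of_le hab).2 hwI)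
    ((intervalIntegrable_iff_integrableOn_Icc_of_le hab).2 (hvI b))] at hsub
  have hnorm : ∫ t in a..b, ‖v t‖ = ∫ t in a..b, v t :=
    intervalIntegral.integral_congr fun t ht =>
      Real.norm_of_nonneg (hv0 t (by rw [uIcc_of_le hab] at ht; exact ht.1))
  rw [hnorm]
  linarith [intervalIntegral_le_setIntegral_Ici hab hw hw0, hφ0 b hab]

theorem ConvexOn.inner_sub_le_of_hasGradientAt {H : Type*} [NormedAddCommGroup H]
    [InnerProductSpace ℝ H] [CompleteSpace H] {f : H → ℝ} {v y : H} (hf : ConvexOn ℝ univ f)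
    (hy : HasGradientAt f v y) (x w : H) :
    ⟪y - x, w - v⟫ ≤ ‖w‖ * ‖y - x‖ - (f y - f x) := by
  have hsupport : f y + ⟪v, x - y⟫ ≤ f x :=
    hf.add_fderiv_sub_le (mem_univ y) (mem_univ x) hy.hasFDerivAt
  rw [← neg_sub y x, inner_neg_right, real_inner_comm] at hsupport
  rw [inner_sub_right]
  nlinarith [real_inner_le_norm (y - x) w]

section PerturbedSteepestDescent

variable {H : Type*} [NormedAddCommGroup H] [InnerProductSpace ℝ H]
  {f : H → ℝ} {f' : H → H} {z z' g : ℝ → H} {t0 : ℝ} {x : H}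

theorem integrableOn_value_sub_min [CompleteSpace H] (hconv : ConvexOn ℝ univ f)
    (hgrad : ∀ y, HasGradientAt f (f' y) y) (hx : ∀ y, f x ≤ f y)
    (hz : ∀ t ∈ Ici t0, HasDerivAt z (z' t) t) (heq : ∀ t ∈ Ici t0, z' t + f' (z t) = g t)
    (hg : IntegrableOn (fun t => ‖g t‖) (Ici t0)) :
    IntegrableOn (fun t => f (z t) - f x) (Ici t0) := by
  have hgap : ∀ t, 0 ≤ f (z t) - f x := fun t => sub_nonneg.2 (hx _)
  have hdescent : ∀ t ∈ Ici t0, ⟪z t - x, z' t⟫ ≤ ‖g t‖ * ‖z t - x‖ - (f (z t) - f x) :=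
    fun t ht => by
      rw [eq_sub_of_add_eq (heq t ht)]
      exact hconv.inner_sub_le_of_hasGradientAt (hgrad _) x (g t)
  obtain ⟨R, hR⟩ := exists_norm_le_of_inner_deriv_le (z := fun t => z t - x)
    (fun t ht => (hz t ht).sub_const x) hg fun t ht => by linarith [hdescent t ht, hgap t]
  have hR0 : 0 ≤ R := (norm_nonneg _).trans (hR t0 self_mem_Ici)
  have hfc : Continuous f := continuous_iff_continuousAt.2 fun y => (hgrad y).continuousAt
  refine integrableOn_Ici_of_hasDerivAt_add_le (φ := fun t => ‖z t - x‖ ^ 2 / 2)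
    (φ' := fun t => 2 * ⟪z t - x, z' t⟫ / 2) (w := fun t => R * ‖g t‖)
    (fun t ht => ((hz t ht).sub_const x).norm_sq.div_const 2) (fun t _ => by positivity)
    ((hfc.comp_continuousOn fun t ht => (hz t ht).continuousAt.continuousWithinAt).sub
      continuousOn_const) (fun t _ => hgap t) (hg.const_mul R)
    (fun t _ => mul_nonneg hR0 (norm_nonneg _)) fun t ht => ?_
  have hbound := mul_le_mul_of_nonneg_left (hR t (mem_Ici_of_Ioi ht)) (norm_nonneg (g t))
  linarith [hdescent t (mem_Ici_of_Ioi ht)]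

theorem integrableOn_mul_norm_deriv_sq [CompleteSpace H] (hgrad : ∀ y, HasGradientAt f (f' y) y)
    (hx : ∀ y, f x ≤ f y) (ht0 : 0 ≤ t0) (hz : ∀ t ∈ Ici t0, HasDerivAt z (z' t) t)
    (hz'cont : ContinuousOn z' (Ici t0)) (heq : ∀ t ∈ Ici t0, z' t + f' (z t) = g t)
    (hval : IntegrableOn (fun t => f (z t) - f x) (Ici t0))
    (hg : IntegrableOn (fun t => t * ‖g t‖ ^ 2) (Ici t0)) :
    IntegrableOn (fun t => t * ‖z' t‖ ^ 2) (Ici t0) := by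
  have hgap : ∀ t, 0 ≤ f (z t) - f x := fun t => sub_nonneg.2 (hx _)
  have hderiv : ∀ t ∈ Ici t0, HasDerivAt (fun t => f (z t) - f x) ⟪f' (z t), z' t⟫ t :=
    fun t ht => ((hgrad (z t)).hasFDerivAt.comp_hasDerivAt t (hz t ht)).sub_const (f x)
  refine integrableOn_Ici_of_hasDerivAt_add_le (φ := fun t => 2 * t * (f (z t) - f x))
    (φ' := fun t => 2 * (f (z t) - f x) + 2 * t * ⟪f' (z t), z' t⟫)
    (w := fun t => 2 * (f (z t) - f x) + t * ‖g t‖ ^ 2)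
    (fun t ht => (((hasDerivAt_id' t).const_mul 2).mul (hderiv t ht)).congr_deriv (by ring))
    (fun t ht => mul_nonneg (mul_nonneg zero_le_two (ht0.trans ht)) (hgap t))
    (continuousOn_id.mul (hz'cont.norm.pow 2)) (fun t ht => by have := ht0.trans ht; positivity)
    ((hval.const_mul 2).fun_add hg)
    (fun t ht => by have := ht0.trans ht; have := hgap t; positivity) fun t ht => ?_
  have hdissip : 2 * ⟪g t - z' t, z' t⟫ + ‖z' t‖ ^ 2 ≤ ‖g t‖ ^ 2 := by
    rw [inner_sub_left, real_inner_self_eq_norm_sq]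
    linarith [norm_sub_sq_real (g t) (z' t), sq_nonneg ‖g t - z' t‖]
  rw [← eq_sub_of_add_eq' (heq t (mem_Ici_of_Ioi ht))] at hdissip
  nlinarith [mul_le_mul_of_nonneg_left hdissip (ht0.trans (mem_Ici_of_Ioi ht))]

theorem integrableOn_mul_norm_gradient_sq (hf' : Continuous f') (ht0 : 0 ≤ t0)
    (hz : ∀ t ∈ Ici t0, HasDerivAt z (z' t) t) (heq : ∀ t ∈ Ici t0, z' t + f' (z t) = g t)
    (hvel : IntegrableOn (fun t => t * ‖z' t‖ ^ 2) (Ici t0))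
    (hg : IntegrableOn (fun t => t * ‖g t‖ ^ 2) (Ici t0)) :
    IntegrableOn (fun t => t * ‖f' (z t)‖ ^ 2) (Ici t0) := by
  refine ((hvel.const_mul 2).fun_add (hg.const_mul 2)).mono' ?_ ?_
  · exact (continuousOn_id.mul ((hf'.comp_continuousOn fun t ht =>
      (hz t ht).continuousAt.continuousWithinAt).norm.pow 2)).aestronglyMeasurable
      measurableSet_Ici
  · refine (ae_restrict_iff' measurableSet_Ici).2 (.of_forall fun t ht => ?_)
    have hsplit : ‖f' (z t)‖ ^ 2 ≤ 2 * ‖z' t‖ ^ 2 + 2 * ‖g t‖ ^ 2 := by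
      rw [eq_sub_of_add_eq' (heq t ht)]
      nlinarith [parallelogram_law_with_norm ℝ (g t) (z' t), sq_nonneg ‖g t + z' t‖]
    have ht : 0 ≤ t := ht0.trans ht
    rw [Real.norm_of_nonneg (by positivity)]
    nlinarith [mul_le_mul_of_nonneg_left hsplit ht]

end PerturbedSteepestDescent

/-- Perturbed steepest descent: integral estimates of velocities, gradients and values. -/
theorem perturbed_steepest_descent_integral_estimates
    {H : Type*} [NormedAddCommGroup H] [InnerProductSpace ℝ H] [CompleteSpace H]
    (f : H → ℝ) (f' : H → H)
    (hconv : ConvexOn ℝ Set.univ f)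
    (hgrad : ∀ x, HasGradientAt f (f' x) x)
    (hlip : ∀ s : Set H, Bornology.IsBounded s → ∃ K : NNReal, LipschitzOnWith K f' s)
    (hmin : ∃ z, ∀ y, f z ≤ f y)
    (t0 : ℝ) (ht0 : 0 < t0)
    (z z' g : ℝ → H)
    (hz : ∀ t ∈ Ici t0, HasDerivAt z (z' t) t)
    (hz'cont : ContinuousOn z' (Ici t0))
    (heq : ∀ t ∈ Ici t0, z' t + f' (z t) = g t)
    (hg1 : IntegrableOn (fun t => ‖g t‖) (Ici t0))
    (hg2 : IntegrableOn (fun t => t * ‖g t‖ ^ 2) (Ici t0)) :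
    IntegrableOn (fun t => t * ‖z' t‖ ^ 2) (Ici t0) ∧
    IntegrableOn (fun t => t * ‖f' (z t)‖ ^ 2) (Ici t0) ∧
    IntegrableOn (fun t => f (z t) - ⨅ x, f x) (Ici t0) := by
  obtain ⟨x, hx⟩ := hmin
  have hinf : ⨅ y, f y = f x :=
    IsGLB.ciInf_eq ⟨fun _ ⟨y, hy⟩ => hy ▸ hx y, fun _ hb => hb (mem_range_self x)⟩
  have hf' : Continuous f' := LocallyLipschitz.continuous fun y =>
    let ⟨K, hK⟩ := hlip _ (Metric.isBounded_ball (x := y) (r := 1))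
    ⟨K, _, Metric.ball_mem_nhds y one_pos, hK⟩
  have hval := integrableOn_value_sub_min hconv hgrad hx hz heq hg1
  have hvel := integrableOn_mul_norm_deriv_sq hgrad hx ht0.le hz hz'cont heq hval hg2
  refine ⟨hvel, integrableOn_mul_norm_gradient_sq hf' ht0.le hz heq hvel hg2, ?_⟩
  simpa only [hinf] using hval
end

section
/- Let t0 > 0 and let z : [t0, ∞) → H be a continuously differentiable solution of the perturbed steepest descent equation ż(t) + ∇f(z(t)) = g(t) for all t ≥ t0, where the perturbation g : [t0, ∞) → H satisfies ∫_{t0}^∞ ‖g(t)‖ dt < ∞ and ∫_{t0}^∞ t‖g(t)‖² dt < ∞. Then f(z(t)) − inf_H f = o(1/t) as t → ∞ (i.e., t·(f(z(t)) − inf_H f) → 0), and z(t) converges weakly as t → ∞ to some point of S = argmin_H f, i.e., there exists x* ∈ S such that ⟨z(t) − x*, v⟩ → 0 as t → ∞ for every v ∈ H. -/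
open MeasureTheory Filter Set
open scoped Topology RealInnerProductSpace

/-!
Write `E = f ∘ z` and `m = min f`. For every `x`, convexity and `ż = g - ∇f(z)` give
`⟪z - x, ż⟫ + (E - f x) ≤ ‖g‖ ‖z - x‖`, and `Ė = ⟪∇f(z), g - ∇f(z)⟫ ≤ ‖g‖² / 4`.
For a minimizer `x` the first inequality shows that `√(‖z - x‖² + 1)` grows at rate at most `‖g‖`,
so `z` is bounded; then `d/dt ‖z - x‖² + 2 (E - m) ≤ 2 C ‖g‖` makes `E - m` integrable and
`‖z - x‖` convergent. The second inequality gives `d/dt [t (E - m)] ≤ (E - m) + t ‖g‖² / 4`,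
an integrable bound, so `t (E - m)` converges, and its limit is `0` because `E - m` is integrable
while `1 / t` is not. Hence `E → m`; weak cluster points of `z` are minimizers by the gradient
inequality, and Opial's argument (`‖z - x‖` converges for every minimizer `x`, and two weak cluster
points `x, y` satisfy `⟪x - y, x - y⟫ = 0`) gives weak convergence.
-/

section HalfLine

variable {a c : ℝ} {F F' φ ψ : ℝ → ℝ}

lemma sub_le_integral_of_hasDerivAt_le_s1 (hF : ∀ t ∈ Ici a, HasDerivAt F (F' t) t)
    (hψ : IntegrableOn ψ (Ici a)) (hle : ∀ t ∈ Ici a, F' t ≤ ψ t) {s t : ℝ} (hs : a ≤ s)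
    (hst : s ≤ t) : F t - F s ≤ ∫ u in s..t, ψ u :=
  have hsub : Icc s t ⊆ Ici a := fun _ hu => le_trans hs hu.1
  intervalIntegral.sub_le_integral_of_hasDeriv_right_of_le hst
    (fun u hu => (hF u (hsub hu)).continuousAt.continuousWithinAt)
    (fun u hu => (hF u (hsub (Ioo_subset_Icc_self hu))).hasDerivWithinAt)
    (hψ.mono_set hsub) (fun u hu => hle u (hsub (Ioo_subset_Icc_self hu)))

lemma intervalIntegral_le_integral_Ioi {t : ℝ} (hψ : IntegrableOn ψ (Ici a))
    (hψ0 : ∀ u ∈ Ici a, 0 ≤ ψ u) (ht : a ≤ t) : ∫ u in a..t, ψ u ≤ ∫ u in Ioi a, ψ u := by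
  rw [intervalIntegral.integral_of_le ht]
  exact setIntegral_mono_set (hψ.mono_set Ioi_subset_Ici_self)
    ((ae_restrict_iff' measurableSet_Ioi).2 (ae_of_all _ fun u hu => hψ0 u (mem_Ioi.1 hu).le))
    Ioc_subset_Ioi_self.eventuallyLE

lemma exists_tendsto_of_hasDerivAt_le (hF : ∀ t ∈ Ici a, HasDerivAt F (F' t) t)
    (hψ : IntegrableOn ψ (Ici a)) (hle : ∀ t ∈ Ici a, F' t ≤ ψ t)
    (hc : ∀ t ∈ Ici a, c ≤ F t) : ∃ L, Tendsto F atTop (𝓝 L) := by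
  set G : ℝ → ℝ := fun t => ∫ u in a..t, ψ u
  have hψIoi : IntegrableOn ψ (Ioi a) := hψ.mono_set Ioi_subset_Ici_self
  have hG : Tendsto G atTop (𝓝 (∫ u in Ioi a, ψ u)) :=
    intervalIntegral_tendsto_integral_Ioi a hψIoi tendsto_id
  have hψint : ∀ t, a ≤ t → IntervalIntegrable ψ volume a t := fun t ht =>
    (intervalIntegrable_iff_integrableOn_Icc_of_le ht).2 (hψ.mono_set Icc_subset_Ici_self)
  set Φ : ℝ → ℝ := fun t => F (max a t) - G (max a t)
  have hΦ : Antitone Φ := by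
    intro s t hst
    have hs : a ≤ max a s := le_max_left a s
    have hst' : max a s ≤ max a t := max_le_max le_rfl hst
    have hinc := sub_le_integral_of_hasDerivAt_le_s1 hF hψ hle hs hst'
    have hsplit := intervalIntegral.integral_interval_sub_left (hψint _ (hs.trans hst'))
      (hψint _ hs)
    simp only [Φ, G]
    linarith
  have hFΦ : Φ + G =ᶠ[atTop] F := by
    filter_upwards [eventually_ge_atTop a] with t ht
    simp [Φ, max_eq_right ht]
  rcases tendsto_atTop_of_antitone hΦ with hbot | ⟨L, hL⟩
  · have hFbot : Tendsto F atTop atBot := (hbot.atBot_add hG).congr' hFΦ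
    obtain ⟨t, hlt, hge⟩ :=
      ((hFbot.eventually (eventually_lt_atBot c)).and (eventually_ge_atTop a)).exists
    exact absurd (hc t hge) (not_le.2 hlt)
  · exact ⟨L + ∫ u in Ioi a, ψ u, (hL.add hG).congr' hFΦ⟩

lemma integrableOn_of_hasDerivAt_add_le (hF : ∀ t ∈ Ici a, HasDerivAt F (F' t) t)
    (hφ : ContinuousOn φ (Ici a)) (hφ0 : ∀ t ∈ Ici a, 0 ≤ φ t) (hψ : IntegrableOn ψ (Ici a))
    (hle : ∀ t ∈ Ici a, F' t + φ t ≤ ψ t) (hc : ∀ t ∈ Ici a, c ≤ F t) :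
    IntegrableOn φ (Ici a) := by
  have hφIcc : ∀ t, IntegrableOn φ (Icc a t) := fun t =>
    (hφ.mono Icc_subset_Ici_self).integrableOn_Icc
  have hψIcc : ∀ t, IntegrableOn ψ (Icc a t) := fun t => hψ.mono_set Icc_subset_Ici_self
  have hbound : ∀ t, a ≤ t → ∫ u in a..t, ‖φ u‖ ≤ F a - c + ∫ u in a..t, ψ u := by
    intro t ht
    have hsub := intervalIntegral.sub_le_integral_of_hasDeriv_right_of_le
      (φ := fun u => ψ u - φ u) ht
      (fun u hu => (hF u hu.1).continuousAt.continuousWithinAt)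
      (fun u hu => (hF u (Ioo_subset_Icc_self hu).1).hasDerivWithinAt)
      ((hψIcc t).sub (hφIcc t))
      (fun u hu => le_sub_iff_add_le.2 (hle u (Ioo_subset_Icc_self hu).1))
    rw [intervalIntegral.integral_sub ((intervalIntegrable_iff_integrableOn_Icc_of_le ht).2
      (hψIcc t)) ((intervalIntegrable_iff_integrableOn_Icc_of_le ht).2 (hφIcc t))] at hsub
    have hnorm : ∫ u in a..t, ‖φ u‖ = ∫ u in a..t, φ u :=
      intervalIntegral.integral_congr fun u hu => Real.norm_of_nonneg
        (hφ0 u (by rw [uIcc_of_le ht] at hu; exact hu.1))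
    linarith [hc t ht]
  have hψlim : ∀ᶠ t in atTop, ∫ u in a..t, ψ u < (∫ u in Ioi a, ψ u) + 1 :=
    (intervalIntegral_tendsto_integral_Ioi a (hψ.mono_set Ioi_subset_Ici_self)
      tendsto_id).eventually (gt_mem_nhds (lt_add_one _))
  rw [integrableOn_Ici_iff_integrableOn_Ioi]
  refine integrableOn_Ioi_of_intervalIntegral_norm_bounded (F a - c + ((∫ u in Ioi a, ψ u) + 1))
    a (fun t => (hφIcc t).mono_set Ioc_subset_Icc_self) tendsto_id ?_
  filter_upwards [hψlim, eventually_ge_atTop a] with t hlt ht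
  linarith [hbound t ht]

lemma eq_zero_of_tendsto_mul_of_integrableOn (hφ : IntegrableOn φ (Ioi a)) {L : ℝ}
    (hL : Tendsto (fun t => t * φ t) atTop (𝓝 L)) : L = 0 := by
  by_contra hL0
  have hpos : 0 < |L| / 2 := by positivity
  obtain ⟨b, hb⟩ := eventually_atTop.1 ((hL.abs.eventually (lt_mem_nhds (half_lt_self
    (abs_pos.2 hL0)))).and (eventually_gt_atTop (max a 0)))
  set B := max b (max a 0)
  refine not_integrableOn_Ioi_inv (a := B) ?_
  have hφB : IntegrableOn (fun t => (|L| / 2)⁻¹ * ‖φ t‖) (Ioi B) :=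
    (hφ.mono_set (Ioi_subset_Ioi (le_max_of_le_right (le_max_left a 0)))).norm.const_mul _
  refine hφB.mono' measurable_inv.aestronglyMeasurable
    ((ae_restrict_iff' measurableSet_Ioi).2 (ae_of_all _ fun t ht => ?_))
  have htb : b ≤ t := (le_max_left _ _).trans ht.le
  have ht0 : 0 < t := (le_max_right a 0).trans_lt ((le_max_right _ _).trans_lt ht)
  have hlt := (hb t htb).1
  rw [abs_mul, abs_of_pos ht0] at hlt
  have hφt : |L| / 2 / t ≤ ‖φ t‖ := by
    rw [div_le_iff₀ ht0, Real.norm_eq_abs, mul_comm]; exact hlt.le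
  calc ‖t⁻¹‖ = (|L| / 2)⁻¹ * (|L| / 2 / t) := by
        rw [norm_inv, Real.norm_of_nonneg ht0.le]; field_simp
    _ ≤ (|L| / 2)⁻¹ * ‖φ t‖ := by gcongr

lemma tendsto_zero_of_tendsto_mul_zero (h : Tendsto (fun t => t * φ t) atTop (𝓝 0)) :
    Tendsto φ atTop (𝓝 0) := by
  refine (by simpa using tendsto_inv_atTop_zero.mul h :
    Tendsto (fun t => t⁻¹ * (t * φ t)) atTop (𝓝 0)).congr' ?_
  filter_upwards [eventually_ne_atTop 0] with t ht
  exact inv_mul_cancel_left₀ ht _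

end HalfLine

lemma ConvexOn.add_fderiv_le {E : Type*} [NormedAddCommGroup E] [NormedSpace ℝ E] {f : E → ℝ}
    {f' : E →L[ℝ] ℝ} {x : E} (hf : ConvexOn ℝ univ f) (hx : HasFDerivAt f f' x) (y : E) :
    f x + f' (y - x) ≤ f y := by
  have hline : ConvexOn ℝ univ (f ∘ AffineMap.lineMap (k := ℝ) x y) := by
    simpa using hf.comp_affineMap (AffineMap.lineMap x y)
  have hx0 : HasFDerivAt f f' (AffineMap.lineMap (k := ℝ) x y 0) := by simpa using hx
  have hderiv : HasDerivAt (f ∘ AffineMap.lineMap (k := ℝ) x y) (f' (y - x)) 0 := by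
    simpa using hx0.comp_hasDerivAt (0 : ℝ) AffineMap.hasDerivAt_lineMap
  have hslope := hline.le_slope_of_hasDerivAt (mem_univ 0) (mem_univ 1) zero_lt_one hderiv
  simp only [slope_def_field, Function.comp_apply, AffineMap.lineMap_apply_zero,
    AffineMap.lineMap_apply_one, sub_zero, div_one] at hslope
  linarith

section InnerProductSpace

variable {H : Type*} [NormedAddCommGroup H] [InnerProductSpace ℝ H]

lemma inner_sub_le_norm_sq_div_four (u w : H) : ⟪u, w - u⟫ ≤ ‖w‖ ^ 2 / 4 := by
  rw [inner_sub_right, real_inner_self_eq_norm_sq]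
  nlinarith [real_inner_le_norm u w, sq_nonneg (‖u‖ - ‖w‖ / 2)]

/-- `√(‖z - x‖² + 1)`, unlike `‖z - x‖`, is differentiable, and it grows at rate at most `ρ`. -/
lemma norm_sub_le_of_inner_deriv_le {z z' : ℝ → H} {ρ : ℝ → ℝ} {t0 : ℝ} {x : H}
    (hz : ∀ t ∈ Ici t0, HasDerivAt z (z' t) t) (hρ : IntegrableOn ρ (Ici t0))
    (hρ0 : ∀ t ∈ Ici t0, 0 ≤ ρ t) (hrad : ∀ t ∈ Ici t0, ⟪z t - x, z' t⟫ ≤ ρ t * ‖z t - x‖) :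
    ∀ t ∈ Ici t0, ‖z t - x‖ ≤ √(‖z t0 - x‖ ^ 2 + 1) + ∫ u in Ioi t0, ρ u := by
  set F : ℝ → ℝ := fun t => √(‖z t - x‖ ^ 2 + 1)
  have hFpos : ∀ t, 0 < F t := fun t => Real.sqrt_pos.2 (by positivity)
  have hnorm_le : ∀ t, ‖z t - x‖ ≤ F t := fun t =>
    Real.le_sqrt_of_sq_le (le_add_of_nonneg_right zero_le_one)
  have hF : ∀ t ∈ Ici t0, HasDerivAt F (2 * ⟪z t - x, z' t⟫ / (2 * F t)) t := fun t ht =>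
    (((hz t ht).sub_const x).norm_sq.add_const 1).sqrt (by positivity)
  have hF' : ∀ t ∈ Ici t0, 2 * ⟪z t - x, z' t⟫ / (2 * F t) ≤ ρ t := fun t ht => by
    rw [mul_div_mul_left _ _ two_ne_zero, div_le_iff₀ (hFpos t)]
    exact (hrad t ht).trans (mul_le_mul_of_nonneg_left (hnorm_le t) (hρ0 t ht))
  intro t ht
  linarith [hnorm_le t, sub_le_integral_of_hasDerivAt_le_s1 hF hρ hF' le_rfl ht,
    intervalIntegral_le_integral_Ioi hρ hρ0 ht]

variable [CompleteSpace H]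

lemma ConvexOn.add_inner_le_of_hasGradientAt {f : H → ℝ} {f' x : H} (hf : ConvexOn ℝ univ f)
    (hx : HasGradientAt f f' x) (y : H) : f x + ⟪f', y - x⟫ ≤ f y := by
  simpa using hf.add_fderiv_le hx.hasFDerivAt y

lemma HasGradientAt.hasDerivAt_comp {f : H → ℝ} {f' : H} {z : ℝ → H} {z' : H} {t : ℝ}
    (hf : HasGradientAt f f' (z t)) (hz : HasDerivAt z z' t) :
    HasDerivAt (fun s => f (z s)) ⟪f', z'⟫ t :=
  (by simpa using hf.hasFDerivAt.comp_hasDerivAt t hz : HasDerivAt (f ∘ z) _ t)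

lemma ConvexOn.inner_sub_gradient_add_sub_le {f : H → ℝ} {d p : H} (hf : ConvexOn ℝ univ f)
    (hp : HasGradientAt f d p) (w x : H) :
    ⟪p - x, w - d⟫ + (f p - f x) ≤ ‖w‖ * ‖p - x‖ := by
  have hsub := hf.add_inner_le_of_hasGradientAt hp x
  have hcs := real_inner_le_norm (p - x) w
  rw [← neg_sub p x, inner_neg_right] at hsub
  rw [inner_sub_right, real_inner_comm d, mul_comm]
  linarith

end InnerProductSpace

section Weak

variable {H α : Type*} [NormedAddCommGroup H] [InnerProductSpace ℝ H]

def WeakTendsto (z : α → H) (l : Filter α) (x : H) : Prop :=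
  ∀ w, Tendsto (fun t => ⟪z t, w⟫) l (𝓝 ⟪x, w⟫)

variable {z : α → H} {l : Filter α} {x : H}

lemma WeakTendsto.tendsto_inner_sub (hz : WeakTendsto z l x) (v : H) :
    Tendsto (fun t => ⟪z t - x, v⟫) l (𝓝 0) := by
  simpa only [inner_sub_left, sub_self] using (hz v).sub_const ⟪x, v⟫

lemma WeakTendsto.eq_of_tendsto_norm_sub_sq {U V : Filter α} [U.NeBot] [V.NeBot] {y : H}
    (hU : U ≤ l) (hV : V ≤ l) (hx : WeakTendsto z U x) (hy : WeakTendsto z V y) {Lx Ly : ℝ}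
    (hLx : Tendsto (fun t => ‖z t - x‖ ^ 2) l (𝓝 Lx))
    (hLy : Tendsto (fun t => ‖z t - y‖ ^ 2) l (𝓝 Ly)) : x = y := by
  have hpolar : ∀ t, ⟪z t, x - y⟫ = (‖z t - y‖ ^ 2 - ‖z t - x‖ ^ 2 + ‖x‖ ^ 2 - ‖y‖ ^ 2) / 2 := by
    intro t
    rw [inner_sub_right, norm_sub_sq_real, norm_sub_sq_real]
    ring
  have hlim : Tendsto (fun t => ⟪z t, x - y⟫) l
      (𝓝 ((Ly - Lx + ‖x‖ ^ 2 - ‖y‖ ^ 2) / 2)) := by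
    simpa only [hpolar] using
      ((((hLy.sub hLx).add_const (‖x‖ ^ 2)).sub_const (‖y‖ ^ 2)).div_const 2)
  have hxlim := tendsto_nhds_unique (hx (x - y)) (hlim.mono_left hU)
  have hylim := tendsto_nhds_unique (hy (x - y)) (hlim.mono_left hV)
  have hzero : ⟪x - y, x - y⟫ = 0 := by rw [inner_sub_left, hxlim, hylim, sub_self]
  exact sub_eq_zero.1 (inner_self_eq_zero.1 hzero)

variable [CompleteSpace H]

/-- The limit functional `w ↦ lim ⟪z t, w⟫` is bounded by `M`, so the Riesz representation
theorem turns it into a vector. -/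
lemma exists_weakTendsto_of_eventually_norm_le (U : Ultrafilter α) {M : ℝ}
    (hb : ∀ᶠ t in (U : Filter α), ‖z t‖ ≤ M) : ∃ x, WeakTendsto z U x := by
  have hbw : ∀ w, ∀ᶠ t in (U : Filter α), ⟪z t, w⟫ ∈ Icc (-(M * ‖w‖)) (M * ‖w‖) := fun w =>
    hb.mono fun t ht => abs_le.1 <| (abs_real_inner_le_norm _ _).trans <|
      mul_le_mul_of_nonneg_right ht (norm_nonneg w)
  have hlim : ∀ w, ∃ c : ℝ, Tendsto (fun t => ⟪z t, w⟫) U (𝓝 c) := fun w => by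
    obtain ⟨c, -, hc⟩ := isCompact_Icc.ultrafilter_le_nhds (U.map fun t => ⟪z t, w⟫)
      (le_principal_iff.2 (hbw w))
    exact ⟨c, hc⟩
  choose φ hφ using hlim
  let Φ : H →ₗ[ℝ] ℝ :=
    { toFun := φ
      map_add' := fun w₁ w₂ => tendsto_nhds_unique (hφ (w₁ + w₂))
        (((hφ w₁).add (hφ w₂)).congr fun t => (inner_add_right _ _ _).symm)
      map_smul' := fun c w => tendsto_nhds_unique (hφ (c • w))
        (((hφ w).const_mul c).congr fun t => (real_inner_smul_right _ _ _).symm) }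
  have hΦ : ∀ w, ‖Φ w‖ ≤ M * ‖w‖ := fun w =>
    (Real.norm_eq_abs _).trans_le <| le_of_tendsto (hφ w).abs <|
      (hbw w).mono fun t ht => abs_le.2 ht
  refine ⟨(InnerProductSpace.toDual ℝ H).symm (Φ.mkContinuous M hΦ), fun w => ?_⟩
  rw [InnerProductSpace.toDual_symm_apply]
  exact hφ w

lemma ConvexOn.le_of_weakTendsto [l.NeBot] {f : H → ℝ} {d : H} {c : ℝ}
    (hf : ConvexOn ℝ univ f) (hx : HasGradientAt f d x) (hz : WeakTendsto z l x)
    (hfz : Tendsto (fun t => f (z t)) l (𝓝 c)) : f x ≤ c := by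
  have hlin : Tendsto (fun t => f x + ⟪d, z t - x⟫) l (𝓝 (f x + 0)) := by
    simpa only [real_inner_comm d] using (hz.tendsto_inner_sub d).const_add (f x)
  rw [add_zero] at hlin
  exact le_of_tendsto_of_tendsto' hlin hfz fun t => hf.add_inner_le_of_hasGradientAt hx (z t)

lemma exists_mem_weakTendsto_of_opial [l.NeBot] {S : Set H} {M : ℝ}
    (hb : ∀ᶠ t in l, ‖z t‖ ≤ M)
    (hdist : ∀ x ∈ S, ∃ L, Tendsto (fun t => ‖z t - x‖ ^ 2) l (𝓝 L))
    (hclust : ∀ (U : Ultrafilter α) (x : H), ↑U ≤ l → WeakTendsto z U x → x ∈ S) :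
    ∃ x ∈ S, WeakTendsto z l x := by
  have hcluster : ∀ U : Ultrafilter α, ↑U ≤ l → ∃ x ∈ S, WeakTendsto z U x := fun U hU =>
    let ⟨x, hx⟩ := exists_weakTendsto_of_eventually_norm_le U (hU hb)
    ⟨x, hclust U x hU hx, hx⟩
  obtain ⟨U, hU⟩ := exists_ultrafilter_le l
  obtain ⟨x, hxS, hx⟩ := hcluster U hU
  refine ⟨x, hxS, fun w => (tendsto_iff_ultrafilter _ _ _).2 fun V hV => ?_⟩
  obtain ⟨y, hyS, hy⟩ := hcluster V hV
  obtain ⟨Lx, hLx⟩ := hdist x hxS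
  obtain ⟨Ly, hLy⟩ := hdist y hyS
  rw [hx.eq_of_tendsto_norm_sub_sq hU hV hy hLx hLy]
  exact hy w

end Weak

namespace PerturbedDescent

variable {H : Type*} [NormedAddCommGroup H] [InnerProductSpace ℝ H]
  {f : H → ℝ} {f' : H → H} {z z' g : ℝ → H} {t0 : ℝ} {x : H}

lemma exists_norm_sub_le (hz : ∀ t ∈ Ici t0, HasDerivAt z (z' t) t)
    (hg : IntegrableOn (fun t => ‖g t‖) (Ici t0))
    (hgap : ∀ t ∈ Ici t0, ⟪z t - x, z' t⟫ + (f (z t) - f x) ≤ ‖g t‖ * ‖z t - x‖)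
    (hx : ∀ y, f x ≤ f y) : ∃ C, ∀ t ∈ Ici t0, ‖z t - x‖ ≤ C :=
  ⟨_, norm_sub_le_of_inner_deriv_le hz hg (fun _ _ => norm_nonneg _)
    fun t ht => by linarith [hgap t ht, hx (z t)]⟩

lemma exists_tendsto_norm_sub_sq (hz : ∀ t ∈ Ici t0, HasDerivAt z (z' t) t)
    (hg : IntegrableOn (fun t => ‖g t‖) (Ici t0))
    (hgap : ∀ t ∈ Ici t0, ⟪z t - x, z' t⟫ + (f (z t) - f x) ≤ ‖g t‖ * ‖z t - x‖)
    (hx : ∀ y, f x ≤ f y) : ∃ L, Tendsto (fun t => ‖z t - x‖ ^ 2) atTop (𝓝 L) := by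
  obtain ⟨C, hC⟩ := exists_norm_sub_le hz hg hgap hx
  exact exists_tendsto_of_hasDerivAt_le (fun t ht => ((hz t ht).sub_const x).norm_sq)
    (hg.const_mul (2 * C))
    (fun t ht => by nlinarith [hgap t ht, hC t ht, hx (z t), norm_nonneg (g t)])
    (c := 0) (fun t _ => by positivity)

variable [CompleteSpace H]

lemma inner_deriv_add_sub_le (hconv : ConvexOn ℝ univ f) (hgrad : ∀ x, HasGradientAt f (f' x) x)
    (heq : ∀ t ∈ Ici t0, z' t + f' (z t) = g t) (x : H) :
    ∀ t ∈ Ici t0, ⟪z t - x, z' t⟫ + (f (z t) - f x) ≤ ‖g t‖ * ‖z t - x‖ := fun t ht =>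
  eq_sub_of_add_eq (heq t ht) ▸ hconv.inner_sub_gradient_add_sub_le (hgrad (z t)) (g t) x

lemma integrableOn_comp_sub (hgrad : ∀ x, HasGradientAt f (f' x) x)
    (hz : ∀ t ∈ Ici t0, HasDerivAt z (z' t) t) (hg : IntegrableOn (fun t => ‖g t‖) (Ici t0))
    (hgap : ∀ t ∈ Ici t0, ⟪z t - x, z' t⟫ + (f (z t) - f x) ≤ ‖g t‖ * ‖z t - x‖)
    (hx : ∀ y, f x ≤ f y) :
    IntegrableOn (fun t => f (z t) - f x) (Ici t0) := by
  obtain ⟨C, hC⟩ := exists_norm_sub_le hz hg hgap hx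
  refine integrableOn_of_hasDerivAt_add_le (fun t ht => ((hz t ht).sub_const x).norm_sq)
    (fun t ht => ?_) (fun t _ => sub_nonneg.2 (hx (z t))) (hg.const_mul (2 * C))
    (fun t ht => by nlinarith [hgap t ht, hC t ht, hx (z t), norm_nonneg (g t)])
    (c := 0) (fun t _ => by positivity)
  exact (((hgrad (z t)).hasDerivAt_comp (hz t ht)).continuousAt.sub
    continuousAt_const).continuousWithinAt

lemma tendsto_mul_comp_sub (hgrad : ∀ x, HasGradientAt f (f' x) x)
    (hz : ∀ t ∈ Ici t0, HasDerivAt z (z' t) t) (heq : ∀ t ∈ Ici t0, z' t + f' (z t) = g t)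
    (hg : IntegrableOn (fun t => t * ‖g t‖ ^ 2) (Ici t0)) (ht0 : 0 < t0) (hx : ∀ y, f x ≤ f y)
    (hint : IntegrableOn (fun t => f (z t) - f x) (Ici t0)) :
    Tendsto (fun t => t * (f (z t) - f x)) atTop (𝓝 0) := by
  obtain ⟨L, hL⟩ : ∃ L, Tendsto (fun t => t * (f (z t) - f x)) atTop (𝓝 L) := by
    refine exists_tendsto_of_hasDerivAt_le
      (fun t ht => (hasDerivAt_id' t).mul (((hgrad (z t)).hasDerivAt_comp (hz t ht)).sub_const _))
      (hint.add (hg.div_const 4)) (fun t ht => ?_) (c := 0)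
      (fun t ht => mul_nonneg (ht0.trans_le ht).le (sub_nonneg.2 (hx (z t))))
    have hdecay := inner_sub_le_norm_sq_div_four (f' (z t)) (g t)
    rw [← eq_sub_of_add_eq (heq t ht)] at hdecay
    rw [Pi.add_apply, one_mul]
    nlinarith [mul_le_mul_of_nonneg_left hdecay (ht0.trans_le ht).le]
  rwa [eq_zero_of_tendsto_mul_of_integrableOn (hint.mono_set Ioi_subset_Ici_self) hL] at hL

end PerturbedDescent

theorem perturbed_steepest_descent_value_rate_and_weak_convergence_general
    {H : Type*} [NormedAddCommGroup H] [InnerProductSpace ℝ H] [CompleteSpace H]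
    (f : H → ℝ) (f' : H → H)
    (hconv : ConvexOn ℝ Set.univ f)
    (hgrad : ∀ x, HasGradientAt f (f' x) x)
    (hmin : ∃ z, ∀ y, f z ≤ f y)
    (t0 : ℝ) (ht0 : 0 < t0)
    (z z' g : ℝ → H)
    (hz : ∀ t ∈ Ici t0, HasDerivAt z (z' t) t)
    (heq : ∀ t ∈ Ici t0, z' t + f' (z t) = g t)
    (hg1 : IntegrableOn (fun t => ‖g t‖) (Ici t0))
    (hg2 : IntegrableOn (fun t => t * ‖g t‖ ^ 2) (Ici t0)) :
    Tendsto (fun t => t * (f (z t) - ⨅ x, f x)) atTop (nhds 0) ∧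
    ∃ xstar : H, (∀ y, f xstar ≤ f y) ∧
      ∀ v : H, Tendsto (fun t => ⟪z t - xstar, v⟫) atTop (nhds 0) := by
  obtain ⟨x0, hx0⟩ := hmin
  have hinf : ⨅ x, f x = f x0 :=
    le_antisymm (ciInf_le ⟨f x0, forall_mem_range.2 hx0⟩ x0) (le_ciInf hx0)
  have hgap := PerturbedDescent.inner_deriv_add_sub_le hconv hgrad heq
  have hrate := PerturbedDescent.tendsto_mul_comp_sub hgrad hz heq hg2 ht0 hx0
    (PerturbedDescent.integrableOn_comp_sub hgrad hz hg1 (hgap x0) hx0)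
  have hvalue : Tendsto (fun t => f (z t)) atTop (𝓝 (f x0)) := by
    simpa using (tendsto_zero_of_tendsto_mul_zero hrate).add_const (f x0)
  obtain ⟨C, hC⟩ := PerturbedDescent.exists_norm_sub_le hz hg1 (hgap x0) hx0
  have hbdd : ∀ᶠ t in atTop, ‖z t‖ ≤ C + ‖x0‖ := by
    filter_upwards [eventually_ge_atTop t0] with t ht
    linarith [norm_le_norm_sub_add (z t) x0, hC t ht]
  obtain ⟨xstar, hxstar, hweak⟩ := exists_mem_weakTendsto_of_opial (S := {x | ∀ y, f x ≤ f y})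
    hbdd (fun x hx => PerturbedDescent.exists_tendsto_norm_sub_sq hz hg1 (hgap x) hx)
    (fun U x hU hx y => (hconv.le_of_weakTendsto (hgrad x) hx (hvalue.mono_left hU)).trans (hx0 y))
  exact ⟨hinf ▸ hrate, xstar, hxstar, hweak.tendsto_inner_sub⟩

/-- Perturbed steepest descent: o(1/t) convergence of values and weak convergence of the
trajectory towards a minimizer of `f`. -/
theorem perturbed_steepest_descent_value_rate_and_weak_convergence
    {H : Type*} [NormedAddCommGroup H] [InnerProductSpace ℝ H] [CompleteSpace H]
    (f : H → ℝ) (f' : H → H)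
    (hconv : ConvexOn ℝ Set.univ f)
    (hgrad : ∀ x, HasGradientAt f (f' x) x)
    (hlip : ∀ s : Set H, Bornology.IsBounded s → ∃ K : NNReal, LipschitzOnWith K f' s)
    (hmin : ∃ z, ∀ y, f z ≤ f y)
    (t0 : ℝ) (ht0 : 0 < t0)
    (z z' g : ℝ → H)
    (hz : ∀ t ∈ Ici t0, HasDerivAt z (z' t) t)
    (hz'cont : ContinuousOn z' (Ici t0))
    (heq : ∀ t ∈ Ici t0, z' t + f' (z t) = g t)
    (hg1 : IntegrableOn (fun t => ‖g t‖) (Ici t0))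
    (hg2 : IntegrableOn (fun t => t * ‖g t‖ ^ 2) (Ici t0)) :
    Tendsto (fun t => t * (f (z t) - ⨅ x, f x)) atTop (nhds 0) ∧
    ∃ xstar : H, (∀ y, f xstar ≤ f y) ∧
      ∀ v : H, Tendsto (fun t => ⟪z t - xstar, v⟫) atTop (nhds 0) :=
  perturbed_steepest_descent_value_rate_and_weak_convergence_general f f' hconv hgrad hmin t0 ht0 z
    z' g hz heq hg1 hg2
end

section
/- Let α > 3, s0 > 0, and let x : [s0, ∞) → H be a twice continuously differentiable solution of the inertial system with implicit Hessian driven damping ẍ(s) + (α/s)·ẋ(s) + ∇f(x(s) + (s/(α−1))·ẋ(s)) = 0 for all s ≥ s0. Then f(x(s)) − inf_H f = o(1/s²) as s → ∞, i.e., s²·(f(x(s)) − inf_H f) → 0 as s → ∞. -/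
open MeasureTheory Filter Set
open scoped Topology RealInnerProductSpace

/-!
With `A = α - 1`, the extrapolated point `y s = x s + (s / A) • x' s` solves the rescaled
gradient flow `y' = -(s / A) • ∇f(y)`. Along it `f ∘ y` decreases, and by convexity
`‖y s - z‖² / 2` is a Lyapunov function whose decay bounds `∫ t (f(y t) - min f) dt`. As `f ∘ y`
is monotone, `(3/8) s² (f(y s) - min f) ≤ ∫_{s/2}^{s} t (f(y t) - min f) dt → 0`.
Convexity also gives `(f ∘ x)' ≤ (A / s) (f(y) - f(x))`, hence
`(s ^ A (f(x s) - min f))' ≤ A s ^ (A - 1) (f(y s) - min f) = o(s ^ (A - 3))`, and integrating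
with `A > 2` yields `s ^ A (f(x s) - min f) = o(s ^ (A - 2))`.
-/

theorem hasDerivAt_add_div_smul_of_inertial_eq {E : Type*} [NormedAddCommGroup E]
    [NormedSpace ℝ E] {x x' x'' : ℝ → E} {α s : ℝ} {v : E}
    (hα : α ≠ 1) (hs : s ≠ 0) (hx : HasDerivAt x (x' s) s) (hx' : HasDerivAt x' (x'' s) s)
    (heq : x'' s + (α / s) • x' s + v = 0) :
    HasDerivAt (fun t => x t + (t / (α - 1)) • x' t) (-(s / (α - 1)) • v) s := by
  have hsub : α - 1 ≠ 0 := sub_ne_zero.2 hα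
  refine (hx.add (((hasDerivAt_id' s).div_const (α - 1)).smul hx')).congr_deriv ?_
  rw [eq_neg_of_add_eq_zero_right heq]
  match_scalars <;> field_simp
  ring

theorem sq_sub_sq_div_two_mul_le_integral_mul {a : ℝ → ℝ} {u v : ℝ} (hu : 0 ≤ u)
    (huv : u ≤ v) (ha : AntitoneOn a (Icc u v)) :
    (v ^ 2 - u ^ 2) / 2 * a v ≤ ∫ t in u..v, t * a t := by
  have hint : IntervalIntegrable a volume u v :=
    (ha.mono (by rw [uIcc_of_le huv])).intervalIntegrable
  calc (v ^ 2 - u ^ 2) / 2 * a v = ∫ t in u..v, t * a v := by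
        rw [intervalIntegral.integral_mul_const, integral_id]
    _ ≤ ∫ t in u..v, t * a t :=
        intervalIntegral.integral_mono_on huv (intervalIntegral.intervalIntegrable_id.mul_const _)
          (hint.continuousOn_mul continuousOn_id) fun t ht =>
            mul_le_mul_of_nonneg_left (ha ht (right_mem_Icc.2 huv) ht.2) (hu.trans ht.1)

theorem tendsto_sq_mul_of_antitoneOn_of_integral_mul_le {a : ℝ → ℝ} {s0 C : ℝ}
    (hs0 : 0 ≤ s0) (ha0 : ∀ s ∈ Ici s0, 0 ≤ a s) (ha : AntitoneOn a (Ici s0))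
    (hC : ∀ S ∈ Ici s0, ∫ t in s0..S, t * a t ≤ C) :
    Tendsto (fun S => S ^ 2 * a S) atTop (𝓝 0) := by
  have hφ : ∀ S ∈ Ici s0, IntervalIntegrable (fun t => t * a t) volume s0 S := fun S hS =>
    (ha.mono (by rw [uIcc_of_le hS]; exact Icc_subset_Ici_self)).intervalIntegrable
      |>.continuousOn_mul continuousOn_id
  have hφ0 : ∀ t ∈ Ici s0, 0 ≤ t * a t := fun t ht => mul_nonneg (hs0.trans ht) (ha0 t ht)
  have hφint : IntegrableOn (fun t => t * a t) (Ioi s0) := by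
    refine integrableOn_Ioi_of_intervalIntegral_norm_bounded C s0
      (fun S => ((hφ _ (le_max_right S s0)).1).mono_set (Ioc_subset_Ioc_right (le_max_left S s0)))
      tendsto_id ?_
    filter_upwards [eventually_ge_atTop s0] with S hS
    rw [intervalIntegral.integral_congr fun t ht => Real.norm_of_nonneg
      (hφ0 t (by rw [uIcc_of_le hS] at ht; exact ht.1))]
    exact hC S hS
  have hlim := intervalIntegral_tendsto_integral_Ioi s0 hφint tendsto_id
  have htail : Tendsto (fun S => ∫ t in S / 2..S, t * a t) atTop (𝓝 0) := by
    rw [← sub_self (∫ t in Ioi s0, t * a t)]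
    refine (hlim.sub (hlim.comp (tendsto_id.atTop_div_const two_pos))).congr' ?_
    filter_upwards [eventually_ge_atTop (2 * s0)] with S hS
    exact intervalIntegral.integral_interval_sub_left (hφ S (by simp; linarith))
      (hφ _ (by simp; linarith))
  refine squeeze_zero' ?_ ?_ (by simpa using htail.const_mul (8 / 3))
  · filter_upwards [eventually_ge_atTop s0] with S hS
    exact mul_nonneg (sq_nonneg S) (ha0 S hS)
  · filter_upwards [eventually_ge_atTop (2 * s0)] with S hS
    have := sq_sub_sq_div_two_mul_le_integral_mul (a := a) (u := S / 2) (v := S) (by linarith)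
      (by linarith) (ha.mono fun t ht => by simp at ht ⊢; linarith [ht.1])
    linarith

theorem rpow_mul_sub_le_of_hasDerivAt_le {g g' a : ℝ → ℝ} {A T ε : ℝ} (hA : 2 < A)
    (hT : 0 < T) (hg : ∀ s ∈ Ici T, HasDerivAt g (g' s) s)
    (hg' : ∀ s ∈ Ici T, g' s ≤ A / s * (a s - g s)) (ha : ∀ s ∈ Ici T, s ^ 2 * a s ≤ ε)
    {S : ℝ} (hS : T ≤ S) :
    S ^ A * g S - A * ε / (A - 2) * S ^ (A - 2) ≤
      T ^ A * g T - A * ε / (A - 2) * T ^ (A - 2) := by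
  have hpow : ∀ s > 0, ∀ p : ℝ, HasDerivAt (fun t : ℝ => t ^ p) (p * s ^ (p - 1)) s :=
    fun s hs p => Real.hasDerivAt_rpow_const (Or.inl hs.ne')
  have hΨ : ∀ s ∈ Ici T, HasDerivAt (fun t => t ^ A * g t - A * ε / (A - 2) * t ^ (A - 2))
      (A * s ^ (A - 1) * g s + s ^ A * g' s - A * ε / (A - 2) * ((A - 2) * s ^ (A - 2 - 1))) s :=
    fun s hs => ((hpow s (hT.trans_le hs) A).mul (hg s hs)).sub
      ((hpow s (hT.trans_le hs) (A - 2)).const_mul _)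
  refine antitoneOn_of_hasDerivWithinAt_nonpos (convex_Ici T)
    (fun s hs => (hΨ s hs).continuousAt.continuousWithinAt)
    (fun s hs => (hΨ s (interior_subset hs)).hasDerivWithinAt) (fun s hs => ?_)
    self_mem_Ici hS hS
  rw [interior_Ici] at hs
  have hs0 : 0 < s := hT.trans hs
  have hsT : s ∈ Ici T := mem_Ici.2 (le_of_lt hs)
  have hA1 : s ^ A = s ^ (A - 1) * s := by
    rw [← Real.rpow_add_one hs0.ne']; ring_nf
  have hA3 : s ^ (A - 1) = s ^ (A - 2 - 1) * s ^ 2 := by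
    rw [← Real.rpow_natCast, ← Real.rpow_add hs0]; norm_num; ring_nf
  have hg's : s ^ A * g' s ≤ A * s ^ (A - 1) * (a s - g s) := by
    calc s ^ A * g' s ≤ s ^ A * (A / s * (a s - g s)) :=
          mul_le_mul_of_nonneg_left (hg' s hsT) (by positivity)
      _ = A * s ^ (A - 1) * (a s - g s) := by rw [hA1]; field_simp
  have has : s ^ (A - 2 - 1) * (s ^ 2 * a s) ≤ s ^ (A - 2 - 1) * ε :=
    mul_le_mul_of_nonneg_left (ha s hsT) (by positivity)
  have hA2 : A * ε / (A - 2) * ((A - 2) * s ^ (A - 2 - 1)) = A * (s ^ (A - 2 - 1) * ε) := by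
    field_simp [show A - 2 ≠ 0 by linarith]
  calc A * s ^ (A - 1) * g s + s ^ A * g' s - A * ε / (A - 2) * ((A - 2) * s ^ (A - 2 - 1))
      ≤ A * (s ^ (A - 2 - 1) * (s ^ 2 * a s) - s ^ (A - 2 - 1) * ε) := by
        rw [hA2, ← mul_assoc (s ^ (A - 2 - 1)), ← hA3]; linarith
    _ ≤ 0 := mul_nonpos_of_nonneg_of_nonpos (by linarith) (by linarith)

theorem tendsto_sq_mul_of_hasDerivAt_le {g g' a : ℝ → ℝ} {A s0 : ℝ} (hA : 2 < A) (hs0 : 0 < s0)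
    (hg0 : ∀ s ∈ Ici s0, 0 ≤ g s) (hg : ∀ s ∈ Ici s0, HasDerivAt g (g' s) s)
    (hg' : ∀ s ∈ Ici s0, g' s ≤ A / s * (a s - g s))
    (ha : Tendsto (fun s => s ^ 2 * a s) atTop (𝓝 0)) :
    Tendsto (fun s => s ^ 2 * g s) atTop (𝓝 0) := by
  refine tendsto_order.2 ⟨fun c hc => ?_, fun ε hε => ?_⟩
  · filter_upwards [eventually_ge_atTop s0] with S hS
    exact hc.trans_le (mul_nonneg (sq_nonneg S) (hg0 S hS))
  set ε0 := (A - 2) / A * (ε / 2)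
  have hε0 : A * ε0 / (A - 2) = ε / 2 := by
    simp only [ε0]; field_simp [show A - 2 ≠ 0 by linarith]
  obtain ⟨T, hT⟩ := eventually_atTop.1 ((ha.eventually (eventually_le_nhds (by positivity :
    0 < ε0))).and (eventually_ge_atTop s0))
  have hTs0 : s0 ≤ T := (hT T le_rfl).2
  have hdecay : Tendsto (fun S : ℝ => T ^ A * g T * S ^ (2 - A)) atTop (𝓝 0) := by
    simpa using (tendsto_rpow_neg_atTop (by linarith : 0 < A - 2)).const_mul _
      |>.congr fun S => by rw [neg_sub]
  filter_upwards [eventually_ge_atTop T,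
    hdecay.eventually (eventually_lt_nhds (by positivity : 0 < ε / 2))] with S hS hSε
  have hS0 : 0 < S := hs0.trans_le (hTs0.trans hS)
  have key := rpow_mul_sub_le_of_hasDerivAt_le hA (hs0.trans_le hTs0)
    (fun s hs => hg s (hTs0.trans hs)) (fun s hs => hg' s (hTs0.trans hs))
    (fun s hs => (hT s hs).1) hS
  rw [hε0] at key
  have hTpos : 0 ≤ ε / 2 * T ^ (A - 2) :=
    mul_nonneg (by positivity) (Real.rpow_nonneg (hs0.le.trans hTs0) _)
  have hcancel : S ^ (2 - A) * S ^ (A - 2) = 1 := by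
    rw [← Real.rpow_add hS0]; norm_num
  calc S ^ 2 * g S = S ^ (2 - A) * (S ^ A * g S) := by
        rw [← mul_assoc, ← Real.rpow_add hS0]; norm_num
    _ ≤ S ^ (2 - A) * (T ^ A * g T + ε / 2 * S ^ (A - 2)) := by
        gcongr; linarith
    _ = T ^ A * g T * S ^ (2 - A) + ε / 2 * (S ^ (2 - A) * S ^ (A - 2)) := by ring
    _ < ε := by rw [hcancel]; linarith

section Hilbert

variable {H : Type*} [NormedAddCommGroup H] [InnerProductSpace ℝ H] [CompleteSpace H]

theorem HasGradientAt.comp_hasDerivAt {f : H → ℝ} {f' y' : H} {y : ℝ → H} {s : ℝ}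
    (hf : HasGradientAt f f' (y s)) (hy : HasDerivAt y y' s) :
    HasDerivAt (fun t => f (y t)) ⟪f', y'⟫ s := by
  have := (hasGradientAt_iff_hasFDerivAt.mp hf).comp_hasDerivAt s hy
  simp only [InnerProductSpace.toDual_apply_apply] at this
  exact this

theorem ConvexOn.add_inner_sub_le_of_hasGradientAt {s : Set H} {f : H → ℝ} {f' u v : H}
    (hf : ConvexOn ℝ s f) (hu : u ∈ s) (hv : v ∈ s) (h : HasGradientAt f f' u) :
    f u + ⟪f', v - u⟫ ≤ f v := by
  set L : ℝ →ᵃ[ℝ] H := AffineMap.lineMap u v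
  have hline : HasDerivAt (f ∘ L) ⟪f', v - u⟫ 0 :=
    (by simpa [L] using h : HasGradientAt f f' (L 0)).comp_hasDerivAt
      AffineMap.hasDerivAt_lineMap
  have := (hf.comp_affineMap L).le_slope_of_hasDerivAt
    (by simpa [L] using hu) (by simpa [L] using hv) zero_lt_one hline
  simp [L, slope_def_field] at this
  linarith

variable {f : H → ℝ} {f' : H → H} {y : ℝ → H} {c : ℝ → ℝ} {s0 : ℝ}

theorem antitoneOn_comp_of_hasDerivAt_neg_smul_gradient (hgrad : ∀ x, HasGradientAt f (f' x) x)
    (hy : ∀ s ∈ Ici s0, HasDerivAt y (-c s • f' (y s)) s) (hc : ∀ s ∈ Ici s0, 0 ≤ c s) :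
    AntitoneOn (fun s => f (y s)) (Ici s0) := by
  have hfy : ∀ s ∈ Ici s0, HasDerivAt (fun t => f (y t)) (-c s * ‖f' (y s)‖ ^ 2) s :=
    fun s hs => by simpa [real_inner_smul_right] using (hgrad (y s)).comp_hasDerivAt (hy s hs)
  refine antitoneOn_of_hasDerivWithinAt_nonpos (convex_Ici s0)
    (fun s hs => (hfy s hs).continuousAt.continuousWithinAt)
    (fun s hs => (hfy s (interior_subset hs)).hasDerivWithinAt) fun s hs => ?_
  have := hc s (interior_subset hs)
  nlinarith [sq_nonneg ‖f' (y s)‖]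

theorem integral_mul_sub_le_of_hasDerivAt_neg_smul_gradient (hf : ConvexOn ℝ univ f)
    (hgrad : ∀ x, HasGradientAt f (f' x) x)
    (hy : ∀ s ∈ Ici s0, HasDerivAt y (-c s • f' (y s)) s) (hc0 : ∀ s ∈ Ici s0, 0 ≤ c s)
    (hc : ContinuousOn c (Ici s0)) (z : H) {S : ℝ} (hS : s0 ≤ S) :
    ∫ t in s0..S, c t * (f (y t) - f z) ≤ ‖y s0 - z‖ ^ 2 / 2 := by
  have hsub : Icc s0 S ⊆ Ici s0 := Icc_subset_Ici_self
  have hdist : ∀ s ∈ Ici s0, HasDerivAt (fun t => -(‖y t - z‖ ^ 2 / 2))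
      (c s * ⟪y s - z, f' (y s)⟫) s := fun s hs => by
    refine (((hy s hs).sub_const z).norm_sq.div_const 2).neg.congr_deriv ?_
    rw [inner_smul_right]; ring
  have hyc : ContinuousOn y (Ici s0) := fun s hs => (hy s hs).continuousAt.continuousWithinAt
  have hint : IntegrableOn (fun t => c t * (f (y t) - f z)) (Icc s0 S) :=
    ((hc.mul (((HasGradientAt.continuousOn fun x _ => hgrad x).comp hyc (mapsTo_univ _ _)).sub
      continuousOn_const)).mono hsub).integrableOn_Icc
  have key := intervalIntegral.integral_le_sub_of_hasDeriv_right_of_le hS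
    (fun s hs => (hdist s (hsub hs)).continuousAt.continuousWithinAt)
    (fun s hs => (hdist s (hsub (Ioo_subset_Icc_self hs))).hasDerivWithinAt) hint fun s hs => by
      have hs' : s ∈ Ici s0 := hsub (Ioo_subset_Icc_self hs)
      have := hf.add_inner_sub_le_of_hasGradientAt (mem_univ (y s)) (mem_univ z) (hgrad (y s))
      rw [← neg_sub, inner_neg_right, real_inner_comm] at this
      exact mul_le_mul_of_nonneg_left (by linarith) (hc0 s hs')
  nlinarith [sq_nonneg ‖y S - z‖]

theorem tendsto_sq_mul_sub_of_hasDerivAt_neg_div_smul_gradient (hf : ConvexOn ℝ univ f)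
    (hgrad : ∀ x, HasGradientAt f (f' x) x) {z : H} (hz : ∀ v, f z ≤ f v) {A : ℝ} (hA : 0 < A)
    (hs0 : 0 ≤ s0) (hy : ∀ s ∈ Ici s0, HasDerivAt y (-(s / A) • f' (y s)) s) :
    Tendsto (fun s => s ^ 2 * (f (y s) - f z)) atTop (𝓝 0) := by
  have hc0 : ∀ s ∈ Ici s0, 0 ≤ s / A := fun s hs => div_nonneg (hs0.trans hs) hA.le
  refine tendsto_sq_mul_of_antitoneOn_of_integral_mul_le hs0 (C := A * (‖y s0 - z‖ ^ 2 / 2))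
    (fun s _ => sub_nonneg.2 (hz _))
    (fun s hs t ht hst => sub_le_sub_right
      (antitoneOn_comp_of_hasDerivAt_neg_smul_gradient hgrad hy hc0 hs ht hst) _) fun S hS => ?_
  calc ∫ t in s0..S, t * (f (y t) - f z) = A * ∫ t in s0..S, t / A * (f (y t) - f z) := by
        rw [← intervalIntegral.integral_const_mul]
        congr 1 with t
        field_simp
    _ ≤ A * (‖y s0 - z‖ ^ 2 / 2) := mul_le_mul_of_nonneg_left
        (integral_mul_sub_le_of_hasDerivAt_neg_smul_gradient hf hgrad hy hc0
          (continuousOn_id.div_const A) z hS) hA.le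

end Hilbert

theorem implicit_hessian_damping_value_rate_general
    {H : Type*} [NormedAddCommGroup H] [InnerProductSpace ℝ H] [CompleteSpace H]
    (f : H → ℝ) (f' : H → H)
    (hconv : ConvexOn ℝ Set.univ f)
    (hgrad : ∀ x, HasGradientAt f (f' x) x)
    (hmin : ∃ z, ∀ y, f z ≤ f y)
    (α s0 : ℝ) (hα : 3 < α) (hs0 : 0 < s0)
    (x x' x'' : ℝ → H)
    (hx : ∀ s ∈ Ici s0, HasDerivAt x (x' s) s)
    (hx' : ∀ s ∈ Ici s0, HasDerivAt x' (x'' s) s)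
    (heq : ∀ s ∈ Ici s0,
      x'' s + (α / s) • x' s + f' (x s + (s / (α - 1)) • x' s) = 0) :
    Tendsto (fun s => s ^ 2 * (f (x s) - ⨅ v, f v)) atTop (nhds 0) := by
  obtain ⟨z, hz⟩ := hmin
  have hinf : ⨅ v, f v = f z :=
    le_antisymm (ciInf_le ⟨f z, by rintro _ ⟨v, rfl⟩; exact hz v⟩ z) (le_ciInf hz)
  set A := α - 1
  have hA : 2 < A := by linarith
  set y := fun s => x s + (s / A) • x' s
  have hy : ∀ s ∈ Ici s0, HasDerivAt y (-(s / A) • f' (y s)) s := fun s hs =>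
    hasDerivAt_add_div_smul_of_inertial_eq (by linarith) (hs0.trans_le hs).ne' (hx s hs)
      (hx' s hs) (heq s hs)
  rw [hinf]
  refine tendsto_sq_mul_of_hasDerivAt_le hA hs0 (fun s _ => sub_nonneg.2 (hz _))
    (fun s hs => ((hgrad (x s)).comp_hasDerivAt (hx s hs)).sub_const (f z)) (fun s hs => ?_)
    (tendsto_sq_mul_sub_of_hasDerivAt_neg_div_smul_gradient hconv hgrad hz (by linarith)
      hs0.le hy)
  have hs' : 0 < s := hs0.trans_le hs
  have := hconv.add_inner_sub_le_of_hasGradientAt (mem_univ (x s)) (mem_univ (y s)) (hgrad (x s))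
  rw [add_sub_cancel_left, inner_smul_right] at this
  calc ⟪f' (x s), x' s⟫ = A / s * (s / A * ⟪f' (x s), x' s⟫) := by field_simp
    _ ≤ A / s * (f (y s) - f z - (f (x s) - f z)) :=
      mul_le_mul_of_nonneg_left (by linarith) (div_nonneg (by linarith) hs'.le)

/-- Implicit Hessian driven damping with `α > 3`: o(1/s²) convergence of the values. -/
theorem implicit_hessian_damping_value_rate
    {H : Type*} [NormedAddCommGroup H] [InnerProductSpace ℝ H] [CompleteSpace H]
    (f : H → ℝ) (f' : H → H)
    (hconv : ConvexOn ℝ Set.univ f)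
    (hgrad : ∀ x, HasGradientAt f (f' x) x)
    (hlip : ∀ s : Set H, Bornology.IsBounded s → ∃ K : NNReal, LipschitzOnWith K f' s)
    (hmin : ∃ z, ∀ y, f z ≤ f y)
    (α s0 : ℝ) (hα : 3 < α) (hs0 : 0 < s0)
    (x x' x'' : ℝ → H)
    (hx : ∀ s ∈ Ici s0, HasDerivAt x (x' s) s)
    (hx' : ∀ s ∈ Ici s0, HasDerivAt x' (x'' s) s)
    (hx''cont : ContinuousOn x'' (Ici s0))
    (heq : ∀ s ∈ Ici s0,
      x'' s + (α / s) • x' s + f' (x s + (s / (α - 1)) • x' s) = 0) :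
    Tendsto (fun s => s ^ 2 * (f (x s) - ⨅ v, f v)) atTop (nhds 0) :=
  implicit_hessian_damping_value_rate_general f f' hconv hgrad hmin α s0 hα hs0 x x' x'' hx hx' heq
end

section
/- Let f : H → ℝ be convex and continuously differentiable with ∇f Lipschitz continuous with constant L > 0 on all of H, and assume argmin_H f is nonempty. Let 0 < λ < 1/L, and let (t_k)_{k≥1} be a sequence of reals with t_1 = 1, t_k ≥ 1 for all k ≥ 1, and t_{k+1}² − t_{k+1} ≤ t_k² for all k ≥ 1. Set α_k = (t_k − 1)/t_{k+1}. Given x_0 = x_1 ∈ H, define for k ≥ 1 the Nesterov/Ravine iterations y_k = x_k + α_k(x_k − x_{k−1}) and x_{k+1} = y_k − λ∇f(y_k). Then there exists a constant C ≥ 0 such that for all k ≥ 1, f(y_k) − inf_H f ≤ C/t_{k+1}² and f(x_k) − inf_H f ≤ C/t_{k+1}². -/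
/-!
A Lyapunov argument. By the descent lemma and convexity, and since `λL ≤ 1`, every gradient step
`x_{k+1} = y_k - λ∇f(y_k)` satisfies the three-point inequality
`f(x_{k+1}) ≤ f(v) + (‖y_k - v‖² - ‖x_{k+1} - v‖²) / (2λ)` for all `v`. Adding its instances at
`v = x_k` and at a minimiser `v = z` with weights `t_{k+1}² - t_{k+1}` and `t_{k+1}`, and using
`t_{k+1}² - t_{k+1} ≤ t_k²`, shows that `E_k = t_k² (f(x_k) - f(z)) + ‖w_k - z‖² / (2λ)`, where
`w_k = x_{k-1} + t_k (x_k - x_{k-1}) = t_{k+1} y_k - (t_{k+1} - 1) x_k`, is nonincreasing. This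
gives the rate for `x_k`, as `t_{k+1}² ≤ 3 t_k²`. Boundedness of `E_k` bounds `w_k`, hence also
`x_k`, which is a convex combination of `w_k` and `x_{k-1}`; so `t_{k+1} ‖y_k - x_k‖` and
`t_{k+1} ‖x_{k+1} - x_k‖` stay bounded, and convexity gives
`f(y_k) - f(x_k) ≤ ‖∇f(y_k)‖ ‖y_k - x_k‖ = O(1 / t_{k+1}²)`.
-/

open Set AffineMap
open scoped RealInnerProductSpace

section Gradient

variable {H : Type*} [NormedAddCommGroup H] [InnerProductSpace ℝ H] [CompleteSpace H]
  {f : H → ℝ} {f' : H → H}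

theorem HasGradientAt.hasDerivAt_comp_lineMap {g x u : H} {τ : ℝ}
    (hf : HasGradientAt f g (lineMap x u τ)) :
    HasDerivAt (fun s : ℝ => f (lineMap x u s)) ⟪g, u - x⟫ τ := by
  exact hf.hasFDerivAt.comp_hasDerivAt τ (hasDerivAt_lineMap (a := x) (b := u))

theorem ConvexOn.add_inner_sub_le_of_hasGradientAt_s6 (hf : ConvexOn ℝ univ f) {g x : H}
    (hg : HasGradientAt f g x) (u : H) : f x + ⟪g, u - x⟫ ≤ f u := by
  have hline : ConvexOn ℝ univ (f ∘ lineMap (k := ℝ) x u) := hf.comp_affineMap _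
  have hderiv : HasDerivAt (f ∘ lineMap (k := ℝ) x u) ⟪g, u - x⟫ 0 :=
    HasGradientAt.hasDerivAt_comp_lineMap (by simpa using hg)
  have := hline.le_slope_of_hasDerivAt (mem_univ 0) (mem_univ 1) one_pos hderiv
  simp only [slope_def_field, Function.comp_apply, lineMap_apply_one, lineMap_apply_zero,
    sub_zero, div_one] at this
  linarith

theorem ConvexOn.sub_le_norm_mul_norm_of_hasGradientAt (hf : ConvexOn ℝ univ f) {g x : H}
    (hg : HasGradientAt f g x) (u : H) : f x - f u ≤ ‖g‖ * ‖x - u‖ := by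
  have h := hf.add_inner_sub_le_of_hasGradientAt_s6 hg u
  have hcs := real_inner_le_norm g (x - u)
  rw [← neg_sub x u, inner_neg_right] at h
  linarith

theorem le_add_inner_add_of_lipschitzWith_gradient {L : NNReal}
    (hgrad : ∀ x, HasGradientAt f (f' x) x) (hlip : LipschitzWith L f') (x u : H) :
    f u ≤ f x + ⟪f' x, u - x⟫ + L / 2 * ‖u - x‖ ^ 2 := by
  set d := u - x
  set φ : ℝ → ℝ := fun τ => f (lineMap x u τ) - τ * ⟪f' x, d⟫ - L / 2 * τ ^ 2 * ‖d‖ ^ 2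
  have hφ : ∀ τ, HasDerivAt φ (⟪f' (lineMap x u τ) - f' x, d⟫ - L * τ * ‖d‖ ^ 2) τ := by
    intro τ
    have := ((hgrad (lineMap x u τ)).hasDerivAt_comp_lineMap.sub
      ((hasDerivAt_id τ).mul_const ⟪f' x, d⟫)).sub
      (((hasDerivAt_pow 2 τ).const_mul ((L : ℝ) / 2)).mul_const (‖d‖ ^ 2))
    exact this.congr_deriv (by rw [inner_sub_left]; simp only [Nat.cast_ofNat]; ring)
  have hφ' : ∀ τ ∈ interior (Ici (0 : ℝ)),
      ⟪f' (lineMap x u τ) - f' x, d⟫ - L * τ * ‖d‖ ^ 2 ≤ 0 := by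
    intro τ hτ
    rw [interior_Ici, mem_Ioi] at hτ
    have hdist : ‖f' (lineMap x u τ) - f' x‖ ≤ L * (τ * ‖d‖) := by
      simpa [dist_eq_norm, lineMap_apply, norm_smul, abs_of_pos hτ] using
        hlip.dist_le_mul (lineMap x u τ) x
    nlinarith [real_inner_le_norm (f' (lineMap x u τ) - f' x) d, norm_nonneg d]
  have hanti := antitoneOn_of_hasDerivWithinAt_nonpos (convex_Ici 0)
    (fun τ _ => (hφ τ).continuousAt.continuousWithinAt) (fun τ _ => (hφ τ).hasDerivWithinAt) hφ'
  have := hanti self_mem_Ici (by norm_num : (1 : ℝ) ∈ Ici 0) zero_le_one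
  simp only [φ, lineMap_apply_one, lineMap_apply_zero, one_mul, one_pow, mul_one, zero_mul,
    sub_zero, ne_eq, OfNat.ofNat_ne_zero, not_false_eq_true, zero_pow, mul_zero] at this
  linarith

theorem le_add_norm_sub_sq_sub_norm_sub_sq_of_gradient_step {L : NNReal}
    (hf : ConvexOn ℝ univ f) (hgrad : ∀ x, HasGradientAt f (f' x) x) (hlip : LipschitzWith L f')
    {lam : ℝ} (hlam : 0 < lam) (hlamL : lam * L ≤ 1) (y v : H) :
    f (y - lam • f' y) ≤ f v + (‖y - v‖ ^ 2 - ‖y - lam • f' y - v‖ ^ 2) / (2 * lam) := by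
  set g := f' y
  have hdescent : f (y - lam • g) ≤ f y - lam / 2 * ‖g‖ ^ 2 := by
    have h := le_add_inner_add_of_lipschitzWith_gradient hgrad hlip y (y - lam • g)
    rw [sub_sub_cancel_left, inner_neg_right, real_inner_smul_right, real_inner_self_eq_norm_sq,
      norm_neg, norm_smul, Real.norm_of_nonneg hlam.le] at h
    nlinarith [sq_nonneg ‖g‖]
  have hconvex : f y ≤ f v + ⟪g, y - v⟫ := by
    have h := hf.add_inner_sub_le_of_hasGradientAt_s6 (hgrad y) v
    rw [← neg_sub y v, inner_neg_right] at h
    linarith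
  have hexpand :
      ‖y - lam • g - v‖ ^ 2 = ‖y - v‖ ^ 2 - 2 * lam * ⟪g, y - v⟫ + lam ^ 2 * ‖g‖ ^ 2 := by
    rw [sub_right_comm, norm_sub_sq_real, real_inner_smul_right, real_inner_comm, norm_smul,
      Real.norm_of_nonneg hlam.le]
    ring
  rw [hexpand]
  field_simp
  nlinarith

theorem ConvexOn.sub_le_of_mul_norm_sub_le (hf : ConvexOn ℝ univ f) {y a : H}
    (hg : HasGradientAt f (f' y) y) {lam τ R : ℝ} (hlam : 0 < lam) (hτ : 0 < τ)
    (hya : τ * ‖y - a‖ ≤ R) (hpa : τ * ‖y - lam • f' y - a‖ ≤ R) :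
    f y - f a ≤ 2 * R ^ 2 / lam / τ ^ 2 := by
  have hgrad : lam * ‖f' y‖ ≤ ‖y - a‖ + ‖y - lam • f' y - a‖ :=
    calc lam * ‖f' y‖ = ‖(y - a) - (y - lam • f' y - a)‖ := by
          rw [sub_sub_sub_cancel_right, sub_sub_cancel, norm_smul, Real.norm_of_nonneg hlam.le]
      _ ≤ ‖y - a‖ + ‖y - lam • f' y - a‖ := norm_sub_le _ _
  have hR : 0 ≤ R := (mul_nonneg hτ.le (norm_nonneg (y - a))).trans hya
  have hprod : lam * τ ^ 2 * (‖f' y‖ * ‖y - a‖) ≤ 2 * R ^ 2 := by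
    have := mul_le_mul (mul_le_mul_of_nonneg_left hgrad hτ.le) hya (by positivity) (by positivity)
    nlinarith
  have hconvex := mul_le_mul_of_nonneg_left (hf.sub_le_norm_mul_norm_of_hasGradientAt hg a)
    (by positivity : 0 ≤ lam * τ ^ 2)
  rw [div_div, le_div_iff₀ (by positivity)]
  linarith

end Gradient

section Lyapunov

variable {H : Type*} [NormedAddCommGroup H] [InnerProductSpace ℝ H]

theorem norm_smul_sub_sub_one_smul_sub_sq (τ : ℝ) (p a c : H) :
    ‖τ • p - (τ - 1) • a - c‖ ^ 2 =
      τ * (τ - 1) * ‖p - a‖ ^ 2 + τ * ‖p - c‖ ^ 2 - (τ - 1) * ‖a - c‖ ^ 2 := by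
  have h1 : τ • p - (τ - 1) • a - c = τ • (p - a) + (a - c) := by module
  have h2 : p - c = (p - a) + (a - c) := by abel
  rw [h1, h2, norm_add_sq_real, norm_add_sq_real, norm_smul, mul_pow, Real.norm_eq_abs, sq_abs,
    real_inner_smul_left]
  ring

theorem lyapunov_step_le {f : H → ℝ} {lam τ : ℝ} (hτ : 1 ≤ τ) {p y : H}
    (hp : ∀ v, f p ≤ f v + (‖y - v‖ ^ 2 - ‖p - v‖ ^ 2) / (2 * lam)) (a z : H) :
    τ ^ 2 * (f p - f z) + ‖τ • p - (τ - 1) • a - z‖ ^ 2 / (2 * lam) ≤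
      (τ ^ 2 - τ) * (f a - f z) + ‖τ • y - (τ - 1) • a - z‖ ^ 2 / (2 * lam) := by
  rw [norm_smul_sub_sub_one_smul_sub_sq, norm_smul_sub_sub_one_smul_sub_sq]
  linear_combination (τ * (τ - 1)) * hp a + τ * hp z

end Lyapunov

theorem sq_le_three_mul_sq {a b : ℝ} (ha : 1 ≤ a) (hb : 1 ≤ b) (h : b ^ 2 - b ≤ a ^ 2) :
    b ^ 2 ≤ 3 * a ^ 2 := by
  nlinarith

theorem norm_le_max_of_eq_convex_combination {H : Type*} [SeminormedAddCommGroup H]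
    [NormedSpace ℝ H] {a b : ℕ → H} {θ : ℕ → ℝ} {M : ℝ}
    (hθ : ∀ k, 1 ≤ k → θ k ∈ Icc 0 1)
    (hab : ∀ k, 1 ≤ k → a (k + 1) = θ k • b (k + 1) + (1 - θ k) • a k)
    (hb : ∀ k, 1 ≤ k → ‖b k‖ ≤ M) : ∀ k, 1 ≤ k → ‖a k‖ ≤ max M ‖a 1‖ := by
  intro k hk
  induction k, hk using Nat.le_induction with
  | base => exact le_max_right _ _
  | succ k hk ih =>
    have hball := convex_closedBall (0 : H) (max M ‖a 1‖)
    simp only [← mem_closedBall_zero_iff] at ih ⊢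
    rw [hab k hk]
    exact hball (mem_closedBall_zero_iff.2 ((hb _ (by omega)).trans (le_max_left _ _))) ih
      (hθ k hk).1 (sub_nonneg.2 (hθ k hk).2) (add_sub_cancel _ _)

section Nesterov

variable {H : Type*} [NormedAddCommGroup H] [InnerProductSpace ℝ H]

def nesterovAux (t : ℕ → ℝ) (x : ℕ → H) (k : ℕ) : H := x (k - 1) + t k • (x k - x (k - 1))

theorem nesterovAux_succ (t : ℕ → ℝ) (x : ℕ → H) (k : ℕ) :
    nesterovAux t x (k + 1) = t (k + 1) • x (k + 1) - (t (k + 1) - 1) • x k := by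
  simp only [nesterovAux, Nat.add_sub_cancel]
  module

theorem smul_sub_smul_eq_nesterovAux {t : ℕ → ℝ} {x y : ℕ → H} {k : ℕ} (ht : t (k + 1) ≠ 0)
    (hy : y k = x k + ((t k - 1) / t (k + 1)) • (x k - x (k - 1))) :
    t (k + 1) • y k - (t (k + 1) - 1) • x k = nesterovAux t x k := by
  rw [hy, nesterovAux, smul_add, smul_smul, mul_div_cancel₀ _ ht]
  module

noncomputable def nesterovEnergy (f : H → ℝ) (lam : ℝ) (t : ℕ → ℝ) (x : ℕ → H) (z : H) (k : ℕ) :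
    ℝ :=
  t k ^ 2 * (f (x k) - f z) + ‖nesterovAux t x k - z‖ ^ 2 / (2 * lam)

variable {f : H → ℝ} {lam : ℝ} {t : ℕ → ℝ} {x y : ℕ → H} {z : H}

theorem nesterovEnergy_succ_le (hz : ∀ v, f z ≤ f v) {k : ℕ} (ht : 1 ≤ t (k + 1))
    (htrec : t (k + 1) ^ 2 - t (k + 1) ≤ t k ^ 2)
    (hy : y k = x k + ((t k - 1) / t (k + 1)) • (x k - x (k - 1)))
    (hstep : ∀ v, f (x (k + 1)) ≤ f v + (‖y k - v‖ ^ 2 - ‖x (k + 1) - v‖ ^ 2) / (2 * lam)) :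
    nesterovEnergy f lam t x z (k + 1) ≤ nesterovEnergy f lam t x z k := by
  have hlyap := lyapunov_step_le ht hstep (x k) z
  rw [smul_sub_smul_eq_nesterovAux (by positivity) hy] at hlyap
  have hgap := mul_le_mul_of_nonneg_right htrec (sub_nonneg.2 (hz (x k)))
  rw [nesterovEnergy, nesterovEnergy, nesterovAux_succ]
  linarith

theorem nesterovEnergy_le_one (hz : ∀ v, f z ≤ f v) (htge : ∀ k, 1 ≤ k → 1 ≤ t k)
    (htrec : ∀ k, 1 ≤ k → t (k + 1) ^ 2 - t (k + 1) ≤ t k ^ 2)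
    (hy : ∀ k, 1 ≤ k → y k = x k + ((t k - 1) / t (k + 1)) • (x k - x (k - 1)))
    (hstep : ∀ k, 1 ≤ k → ∀ v,
      f (x (k + 1)) ≤ f v + (‖y k - v‖ ^ 2 - ‖x (k + 1) - v‖ ^ 2) / (2 * lam)) :
    ∀ k, 1 ≤ k → nesterovEnergy f lam t x z k ≤ nesterovEnergy f lam t x z 1 := by
  intro k hk
  induction k, hk using Nat.le_induction with
  | base => exact le_rfl
  | succ k hk ih =>
    exact (nesterovEnergy_succ_le hz (htge _ (by omega)) (htrec k hk) (hy k hk)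
      (hstep k hk)).trans ih

theorem nesterovEnergy_nonneg (hlam : 0 < lam) (hz : ∀ v, f z ≤ f v) (k : ℕ) :
    0 ≤ nesterovEnergy f lam t x z k :=
  add_nonneg (mul_nonneg (sq_nonneg _) (sub_nonneg.2 (hz _))) (by positivity)

theorem sub_le_three_mul_div_sq_of_nesterovEnergy_le (hlam : 0 < lam) (hz : ∀ v, f z ≤ f v)
    {k : ℕ} (htk : 1 ≤ t k) (ht : 1 ≤ t (k + 1)) (htrec : t (k + 1) ^ 2 - t (k + 1) ≤ t k ^ 2)
    {E : ℝ} (hE : nesterovEnergy f lam t x z k ≤ E) :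
    f (x k) - f z ≤ 3 * E / t (k + 1) ^ 2 := by
  have hgap : t k ^ 2 * (f (x k) - f z) ≤ E :=
    (le_add_of_nonneg_right (by positivity)).trans hE
  rw [le_div_iff₀ (by positivity)]
  nlinarith [sq_le_three_mul_sq htk ht htrec, sub_nonneg.2 (hz (x k))]

theorem norm_nesterovAux_sub_le (hlam : 0 < lam) (hz : ∀ v, f z ≤ f v) {k : ℕ} {E : ℝ}
    (hE : nesterovEnergy f lam t x z k ≤ E) : ‖nesterovAux t x k - z‖ ≤ √(2 * lam * E) := by
  have hgap : 0 ≤ t k ^ 2 * (f (x k) - f z) := mul_nonneg (sq_nonneg _) (sub_nonneg.2 (hz _))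
  have hdist : 0 ≤ ‖nesterovAux t x k - z‖ ^ 2 / (2 * lam) := by positivity
  rw [nesterovEnergy] at hE
  rw [Real.le_sqrt (norm_nonneg _) (mul_nonneg (by positivity) (by linarith)),
    ← div_le_iff₀' (by positivity)]
  linarith

theorem norm_sub_le_of_norm_nesterovAux_sub_le (htge : ∀ k, 1 ≤ k → 1 ≤ t k) {M : ℝ}
    (hM : ∀ k, 1 ≤ k → ‖nesterovAux t x k - z‖ ≤ M) :
    ∀ k, 1 ≤ k → ‖x k - z‖ ≤ max M ‖x 1 - z‖ := by
  refine norm_le_max_of_eq_convex_combination (θ := fun k => (t (k + 1))⁻¹)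
    (fun k hk => ?_) (fun k hk => ?_) hM
  · have ht := htge (k + 1) (by omega)
    exact ⟨by positivity, inv_le_one_of_one_le₀ ht⟩
  · have ht : t (k + 1) ≠ 0 := by linarith [htge (k + 1) (by omega)]
    rw [nesterovAux_succ]
    match_scalars <;> field_simp <;> ring

theorem exists_mul_norm_sub_le (hlam : 0 < lam) (hz : ∀ v, f z ≤ f v)
    (htge : ∀ k, 1 ≤ k → 1 ≤ t k)
    (hy : ∀ k, 1 ≤ k → y k = x k + ((t k - 1) / t (k + 1)) • (x k - x (k - 1))) {E : ℝ}
    (hE : ∀ k, 1 ≤ k → nesterovEnergy f lam t x z k ≤ E) :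
    ∃ R, ∀ k, 1 ≤ k → t (k + 1) * ‖y k - x k‖ ≤ R ∧ t (k + 1) * ‖x (k + 1) - x k‖ ≤ R := by
  set M := √(2 * lam * E)
  have hw : ∀ k, 1 ≤ k → ‖nesterovAux t x k - z‖ ≤ M :=
    fun k hk => norm_nesterovAux_sub_le hlam hz (hE k hk)
  have hx := norm_sub_le_of_norm_nesterovAux_sub_le htge hw
  have hwx : ∀ j k, 1 ≤ j → 1 ≤ k → ‖nesterovAux t x j - x k‖ ≤ M + max M ‖x 1 - z‖ :=
    fun j k hj hk => (norm_sub_le_norm_sub_add_norm_sub _ z _).trans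
      (add_le_add (hw j hj) ((norm_sub_rev z _).trans_le (hx k hk)))
  refine ⟨M + max M ‖x 1 - z‖, fun k hk => ?_⟩
  have ht : 0 < t (k + 1) := by linarith [htge (k + 1) (by omega)]
  constructor
  · rw [← Real.norm_of_nonneg ht.le, ← norm_smul, smul_sub,
      show t (k + 1) • y k - t (k + 1) • x k = t (k + 1) • y k - (t (k + 1) - 1) • x k - x k by
        module,
      smul_sub_smul_eq_nesterovAux ht.ne' (hy k hk)]
    exact hwx k k hk hk
  · rw [← Real.norm_of_nonneg ht.le, ← norm_smul, smul_sub,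
      show t (k + 1) • x (k + 1) - t (k + 1) • x k
        = t (k + 1) • x (k + 1) - (t (k + 1) - 1) • x k - x k by module,
      ← nesterovAux_succ]
    exact hwx (k + 1) k (by omega) hk

end Nesterov

theorem nesterov_ravine_fast_convergence_general
    {H : Type*} [NormedAddCommGroup H] [InnerProductSpace ℝ H] [CompleteSpace H]
    (f : H → ℝ) (f' : H → H) (L : NNReal) (hL : 0 < (L : ℝ))
    (hconv : ConvexOn ℝ Set.univ f)
    (hgrad : ∀ x, HasGradientAt f (f' x) x)
    (hlip : LipschitzWith L f')
    (hmin : ∃ z, ∀ y, f z ≤ f y)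
    (lam : ℝ) (hlam0 : 0 < lam) (hlam : lam < 1 / (L : ℝ))
    (t : ℕ → ℝ) (htge : ∀ k, 1 ≤ k → 1 ≤ t k)
    (htrec : ∀ k, 1 ≤ k → (t (k + 1)) ^ 2 - t (k + 1) ≤ (t k) ^ 2)
    (x y : ℕ → H)
    (hy : ∀ k, 1 ≤ k → y k = x k + ((t k - 1) / t (k + 1)) • (x k - x (k - 1)))
    (hxk : ∀ k, 1 ≤ k → x (k + 1) = y k - lam • f' (y k)) :
    ∃ C : ℝ, 0 ≤ C ∧ ∀ k, 1 ≤ k →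
      f (y k) - (⨅ v, f v) ≤ C / (t (k + 1)) ^ 2 ∧
      f (x k) - (⨅ v, f v) ≤ C / (t (k + 1)) ^ 2 := by
  obtain ⟨z, hz⟩ := hmin
  have hinf : ⨅ v, f v = f z :=
    le_antisymm (ciInf_le ⟨f z, forall_mem_range.2 hz⟩ z) (le_ciInf hz)
  have hlamL : lam * L ≤ 1 := by
    rw [lt_div_iff₀ hL] at hlam
    linarith
  have hstep : ∀ k, 1 ≤ k → ∀ v,
      f (x (k + 1)) ≤ f v + (‖y k - v‖ ^ 2 - ‖x (k + 1) - v‖ ^ 2) / (2 * lam) := by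
    intro k hk v
    rw [hxk k hk]
    exact le_add_norm_sub_sq_sub_norm_sub_sq_of_gradient_step hconv hgrad hlip hlam0 hlamL _ _
  set E := nesterovEnergy f lam t x z 1
  have hE := nesterovEnergy_le_one hz htge htrec hy hstep
  obtain ⟨R, hR⟩ := exists_mul_norm_sub_le hlam0 hz htge hy hE
  refine ⟨3 * E + 2 * R ^ 2 / lam, ?_, fun k hk => ?_⟩
  · have := nesterovEnergy_nonneg hlam0 hz 1 (t := t) (x := x)
    positivity
  have ht : 0 < t (k + 1) := by linarith [htge (k + 1) (by omega)]
  have hfx : f (x k) - f z ≤ 3 * E / t (k + 1) ^ 2 :=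
    sub_le_three_mul_div_sq_of_nesterovEnergy_le hlam0 hz (htge k hk) (htge (k + 1) (by omega))
      (htrec k hk) (hE k hk)
  have hfy : f (y k) - f (x k) ≤ 2 * R ^ 2 / lam / t (k + 1) ^ 2 :=
    hconv.sub_le_of_mul_norm_sub_le (hgrad _) hlam0 ht (hR k hk).1
      (by rw [← hxk k hk]; exact (hR k hk).2)
  have hfy0 : 0 ≤ 2 * R ^ 2 / lam / t (k + 1) ^ 2 := by positivity
  rw [hinf, add_div]
  exact ⟨by linarith, by linarith⟩

/-- Fast convergence of the function values along the Ravine sequence `(y k)` and the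
Nesterov sequence `(x k)`. -/
theorem nesterov_ravine_fast_convergence
    {H : Type*} [NormedAddCommGroup H] [InnerProductSpace ℝ H] [CompleteSpace H]
    (f : H → ℝ) (f' : H → H) (L : NNReal) (hL : 0 < (L : ℝ))
    (hconv : ConvexOn ℝ Set.univ f)
    (hgrad : ∀ x, HasGradientAt f (f' x) x)
    (hlip : LipschitzWith L f')
    (hmin : ∃ z, ∀ y, f z ≤ f y)
    (lam : ℝ) (hlam0 : 0 < lam) (hlam : lam < 1 / (L : ℝ))
    (t : ℕ → ℝ) (ht1 : t 1 = 1) (htge : ∀ k, 1 ≤ k → 1 ≤ t k)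
    (htrec : ∀ k, 1 ≤ k → (t (k + 1)) ^ 2 - t (k + 1) ≤ (t k) ^ 2)
    (x y : ℕ → H) (hx01 : x 0 = x 1)
    (hy : ∀ k, 1 ≤ k → y k = x k + ((t k - 1) / t (k + 1)) • (x k - x (k - 1)))
    (hxk : ∀ k, 1 ≤ k → x (k + 1) = y k - lam • f' (y k)) :
    ∃ C : ℝ, 0 ≤ C ∧ ∀ k, 1 ≤ k →
      f (y k) - (⨅ v, f v) ≤ C / (t (k + 1)) ^ 2 ∧
      f (x k) - (⨅ v, f v) ≤ C / (t (k + 1)) ^ 2 :=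
  nesterov_ravine_fast_convergence_general f f' L hL hconv hgrad hlip hmin lam hlam0 hlam t htge
    htrec x y hy hxk
end

section
/- Let α > 1, s0 > 0, and let y : [s0, ∞) → H be a twice continuously differentiable curve such that the map s ↦ ∇f(y(s)) is differentiable on [s0, ∞) and y solves the inertial system with explicit Hessian driven damping ÿ(s) + (α/s)·ẏ(s) + (s/(α+1))·(d/ds)(∇f(y(s))) + ∇f(y(s)) = 0 for all s ≥ s0. Then: (i) ∫_{s0}^∞ s‖ẏ(s)‖² ds < ∞; (ii) ∫_{s0}^∞ s·(f(y(s)) − inf_H f) ds < ∞; (iii) ∫_{s0}^∞ s³‖∇f(y(s))‖² ds < ∞; (iv) f(y(s)) − inf_H f = o(1/s²) as s → ∞; (v) y(s) converges weakly as s → ∞ to some point of S = argmin_H f, i.e., there exists x* ∈ S such that ⟨y(s) − x*, v⟩ → 0 as s → ∞ for every v ∈ H. -/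
/-!
Multiplying the equation by `s ^ α` turns its left-hand side into the derivative of
`s ^ α (ẏ + s/(α+1) ∇f(y))`, so `y` solves the first-order system
`ẏ(s) + s/(α+1) ∇f(y(s)) = s^{-α} C`: a time-rescaled gradient flow perturbed by an integrable
term (`α > 1`). For a minimizer `p` and a bound `M` of `‖y - p‖`, the anchor energy
`½‖y - p‖² + M‖C‖ s^{1-α}/(α-1)` decreases at least at rate `s (f(y) - f p)/(α+1)`; this gives
boundedness, estimate (ii) and the convergence of `‖y - p‖`. The value energy
`s² (f(y) - f p) + c s^{2-2α}` decreases up to the integrable term `2 s (f(y) - f p)` and at least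
at rate `s³ ‖∇f(y)‖² / (2(α+1))`, which yields (iii) and the existence of `lim s² (f(y) - f p)`;
the limit is `0` because `s (f(y) - f p)` is integrable. Estimate (i) is read off the first-order
system, and weak convergence follows from Opial's lemma, weak cluster points being minimizers by
the gradient inequality.
-/

open MeasureTheory Filter Set
open scoped Topology RealInnerProductSpace

theorem add_intervalIntegral_le_of_hasDerivAt {a b : ℝ} {A A' B : ℝ → ℝ} (hab : a ≤ b)
    (hA : ∀ s ∈ Icc a b, HasDerivAt A (A' s) s) (hB : ContinuousOn B (Icc a b))
    (hle : ∀ s ∈ Icc a b, A' s + B s ≤ 0) :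
    A b + ∫ t in a..b, B t ≤ A a := by
  have key : A b - A a ≤ ∫ t in a..b, -B t :=
    intervalIntegral.sub_le_integral_of_hasDeriv_right_of_le hab
      (fun s hs => (hA s hs).continuousAt.continuousWithinAt)
      (fun s hs => (hA s (Ioo_subset_Icc_self hs)).hasDerivWithinAt)
      hB.neg.integrableOn_Icc (fun s hs => by linarith [hle s (Ioo_subset_Icc_self hs)])
  rw [intervalIntegral.integral_neg] at key
  linarith

theorem antitoneOn_add_intervalIntegral {a : ℝ} {A A' B : ℝ → ℝ}
    (hA : ∀ s ∈ Ici a, HasDerivAt A (A' s) s) (hB : ContinuousOn B (Ici a))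
    (hle : ∀ s ∈ Ici a, A' s + B s ≤ 0) :
    AntitoneOn (fun s => A s + ∫ t in a..s, B t) (Ici a) := by
  intro s hs t ht hst
  have hIcc : Icc s t ⊆ Ici a := fun u hu => le_trans hs hu.1
  have := add_intervalIntegral_le_of_hasDerivAt hst (fun u hu => hA u (hIcc hu))
    (hB.mono hIcc) (fun u hu => hle u (hIcc hu))
  dsimp only
  rw [← intervalIntegral.integral_add_adjacent_intervals
    ((hB.mono Icc_subset_Ici_self).intervalIntegrable_of_Icc hs)
    ((hB.mono hIcc).intervalIntegrable_of_Icc hst)]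
  linarith

theorem integrableOn_Ici_of_hasDerivAt_add_le_s7 {a : ℝ} {A A' B : ℝ → ℝ}
    (hA : ∀ s ∈ Ici a, HasDerivAt A (A' s) s) (hA0 : ∀ s ∈ Ici a, 0 ≤ A s)
    (hB : ContinuousOn B (Ici a)) (hB0 : ∀ s ∈ Ici a, 0 ≤ B s)
    (hle : ∀ s ∈ Ici a, A' s + B s ≤ 0) : IntegrableOn B (Ici a) := by
  rw [integrableOn_Ici_iff_integrableOn_Ioi]
  refine integrableOn_Ioi_of_intervalIntegral_norm_bounded (A a) a
    (fun s => (hB.mono Icc_subset_Ici_self).integrableOn_Icc.mono_set Ioc_subset_Icc_self)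
    tendsto_id ?_
  filter_upwards [eventually_ge_atTop a] with s hs
  rw [intervalIntegral.integral_congr fun t ht =>
    Real.norm_of_nonneg (hB0 t (uIcc_of_le hs ▸ ht).1)]
  have := antitoneOn_add_intervalIntegral hA hB hle self_mem_Ici hs hs
  simp only [intervalIntegral.integral_same, add_zero] at this
  exact (le_add_of_nonneg_left (hA0 s hs)).trans this

theorem AntitoneOn.exists_tendsto_atTop {a m : ℝ} {F : ℝ → ℝ} (hF : AntitoneOn F (Ici a))
    (hm : ∀ᶠ s in atTop, m ≤ F s) : ∃ l, Tendsto F atTop (𝓝 l) := by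
  have hG : Antitone fun s => F (max s a) := fun s t hst =>
    hF (le_max_right s a) (le_max_right t a) (max_le_max_right a hst)
  have hbdd : BddBelow (range fun s => F (max s a)) := by
    refine ⟨m, forall_mem_range.2 fun s => ?_⟩
    obtain ⟨t, hmt, ht⟩ := (hm.and (eventually_ge_atTop (max s a))).exists
    exact hmt.trans (hF (le_max_right s a) ((le_max_right s a).trans ht) ht)
  refine ⟨_, (tendsto_atTop_ciInf hG hbdd).congr' ?_⟩
  filter_upwards [eventually_ge_atTop a] with s hs
  rw [max_eq_left hs]

theorem exists_tendsto_of_hasDerivAt_add_le {a : ℝ} {A A' B : ℝ → ℝ}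
    (hA : ∀ s ∈ Ici a, HasDerivAt A (A' s) s) (hA0 : ∀ s ∈ Ici a, 0 ≤ A s)
    (hB : ContinuousOn B (Ici a)) (hBi : IntegrableOn B (Ici a))
    (hle : ∀ s ∈ Ici a, A' s + B s ≤ 0) : ∃ l, Tendsto A atTop (𝓝 l) := by
  have hP : Tendsto (fun s => ∫ t in a..s, B t) atTop (𝓝 (∫ t in Ioi a, B t)) :=
    intervalIntegral_tendsto_integral_Ioi a (hBi.mono_set Ioi_subset_Ici_self) tendsto_id
  have hlow : ∀ᶠ s in atTop, (∫ t in Ioi a, B t) - 1 ≤ A s + ∫ t in a..s, B t := by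
    filter_upwards [hP.eventually (lt_mem_nhds (sub_one_lt _)), eventually_ge_atTop a]
      with s hs has
    linarith [hA0 s has]
  obtain ⟨l, hl⟩ := (antitoneOn_add_intervalIntegral hA hB hle).exists_tendsto_atTop hlow
  exact ⟨_, (hl.sub hP).congr fun s => add_sub_cancel_right _ _⟩

theorem eq_zero_of_tendsto_mul_of_integrableOn_s7 {a l : ℝ} {h : ℝ → ℝ}
    (hl : Tendsto (fun s => s * h s) atTop (𝓝 l)) (hi : IntegrableOn h (Ici a)) : l = 0 := by
  by_contra hne
  -- otherwise `|h s| ≥ |l| / (2 s)` for large `s`, and `s⁻¹` is not integrable at infinity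
  have hev : ∀ᶠ s in atTop, |l| / 2 < |s * h s| :=
    (continuous_abs.tendsto l |>.comp hl).eventually (lt_mem_nhds (half_lt_self (abs_pos.2 hne)))
  obtain ⟨b, hb⟩ := (hev.and (eventually_ge_atTop (max a 1))).exists_forall_of_atTop
  have hdom : IntegrableOn (fun s => 2 / |l| * ‖h s‖) (Ioi b) :=
    IntegrableOn.mono_set (hi.norm.const_mul _) fun s hs => (le_max_left a 1).trans (hb s hs.le).2
  refine not_integrableOn_Ioi_inv (a := b) (hdom.mono' measurable_inv.aestronglyMeasurable ?_)
  refine (ae_restrict_iff' measurableSet_Ioi).2 (Eventually.of_forall fun s hs => ?_)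
  obtain ⟨hlt, hs1⟩ := hb s hs.le
  have hspos : 0 < s := zero_lt_one.trans_le ((le_max_right a 1).trans hs1)
  rw [norm_inv, Real.norm_of_nonneg hspos.le, Real.norm_eq_abs, inv_le_iff_one_le_mul₀ hspos]
  rw [abs_mul, abs_of_pos hspos] at hlt
  have hl : 0 < |l| := abs_pos.2 hne
  calc (1 : ℝ) = 2 / |l| * (|l| / 2) := by field_simp
    _ ≤ 2 / |l| * (s * |h s|) := by gcongr
    _ = 2 / |l| * |h s| * s := by ring

theorem Real.rpow_one_sub_two_mul {s : ℝ} (hs : 0 < s) (α : ℝ) :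
    s ^ (1 - 2 * α) = s * (s ^ (-α)) ^ 2 := by
  rw [show 1 - 2 * α = 1 + -α + -α by ring, Real.rpow_add hs, Real.rpow_add hs, Real.rpow_one]
  ring

theorem exists_eq_rpow_smul_sub_of_hasDerivAt {E : Type*} [NormedAddCommGroup E]
    [NormedSpace ℝ E] {α s0 : ℝ} (hα : α + 1 ≠ 0) (hs0 : 0 < s0) {u u' g g' : ℝ → E}
    (hu : ∀ s ∈ Ici s0, HasDerivAt u (u' s) s) (hg : ∀ s ∈ Ici s0, HasDerivAt g (g' s) s)
    (heq : ∀ s ∈ Ici s0, u' s + (α / s) • u s + (s / (α + 1)) • g' s + g s = 0) :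
    ∃ C : E, ∀ s ∈ Ici s0, u s = s ^ (-α) • C - (s / (α + 1)) • g s := by
  set w : ℝ → E := fun s => s ^ α • (u s + (s / (α + 1)) • g s)
  have hw : ∀ s ∈ Ici s0, HasDerivWithinAt w 0 (Ici s0) s := by
    intro s hs
    have hspos : 0 < s := hs0.trans_le hs
    have hd : HasDerivAt w _ s := (Real.hasDerivAt_rpow_const (p := α) (Or.inl hspos.ne')).smul
      ((hu s hs).add (((hasDerivAt_id s).div_const (α + 1)).smul (hg s hs)))
    convert hd.hasDerivWithinAt using 1
    have hpow : α * s ^ (α - 1) = s ^ α * (α / s) := by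
      rw [Real.rpow_sub_one hspos.ne']; ring
    rw [hpow, mul_smul, ← smul_add, id]
    refine (smul_eq_zero.2 (Or.inr ?_)).symm
    rw [← heq s hs]
    match_scalars <;> field_simp; ring
  refine ⟨w s0, fun s hs => ?_⟩
  have hconst : w s = w s0 := by
    simpa [sub_eq_zero] using (convex_Ici s0).norm_image_sub_le_of_norm_hasDerivWithin_le
      (f' := fun _ => (0 : E)) (C := 0) hw (fun _ _ => by simp) self_mem_Ici hs
  rw [← hconst, smul_smul, ← Real.rpow_add (hs0.trans_le hs), neg_add_cancel, Real.rpow_zero,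
    one_smul, add_sub_cancel_right]

section InnerProductSpace

variable {H : Type*} [NormedAddCommGroup H] [InnerProductSpace ℝ H]

theorem inner_smul_sub_smul_le (g C : H) (a : ℝ) {b : ℝ} (hb : 0 < b) :
    ⟪g, a • C - b • g⟫ ≤ a ^ 2 * ‖C‖ ^ 2 / (2 * b) - b / 2 * ‖g‖ ^ 2 := by
  have hC : a * ⟪g, C⟫ ≤ |a| * (‖g‖ * ‖C‖) :=
    calc a * ⟪g, C⟫ ≤ |a * ⟪g, C⟫| := le_abs_self _
      _ = |a| * |⟪g, C⟫| := abs_mul _ _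
      _ ≤ |a| * (‖g‖ * ‖C‖) := by gcongr; exact abs_real_inner_le_norm g C
  have hsq : 0 ≤ (b * ‖g‖ - |a| * ‖C‖) ^ 2 / (2 * b) := by positivity
  have hexpand : (b * ‖g‖ - |a| * ‖C‖) ^ 2 / (2 * b)
      = b / 2 * ‖g‖ ^ 2 - |a| * (‖g‖ * ‖C‖) + a ^ 2 * ‖C‖ ^ 2 / (2 * b) := by
    rw [← sq_abs a]; field_simp; ring
  rw [inner_sub_right, real_inner_smul_right, real_inner_smul_right, real_inner_self_eq_norm_sq]
  linarith

theorem norm_smul_sub_smul_sq_le (C g : H) (a b : ℝ) :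
    ‖a • C - b • g‖ ^ 2 ≤ 2 * a ^ 2 * ‖C‖ ^ 2 + 2 * b ^ 2 * ‖g‖ ^ 2 := by
  have := parallelogram_law_with_norm ℝ (a • C) (b • g)
  rw [norm_smul, norm_smul, Real.norm_eq_abs, Real.norm_eq_abs] at this
  nlinarith [sq_abs a, sq_abs b, norm_nonneg (a • C + b • g)]

variable [CompleteSpace H]

theorem HasGradientAt.hasDerivAt_comp_s7 {f : H → ℝ} {g : H} {c : ℝ → H} {c' : H} {t : ℝ}
    (hf : HasGradientAt f g (c t)) (hc : HasDerivAt c c' t) :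
    HasDerivAt (fun u => f (c u)) ⟪g, c'⟫ t := by
  have := hf.hasFDerivAt.comp_hasDerivAt t hc
  rwa [InnerProductSpace.toDual_apply_apply] at this

theorem ConvexOn.add_inner_sub_le {f : H → ℝ} {x g : H} (hf : ConvexOn ℝ univ f)
    (hx : HasGradientAt f g x) (w : H) : f x + ⟪g, w - x⟫ ≤ f w := by
  have hline : HasDerivAt (f ∘ AffineMap.lineMap x w) ⟪g, w - x⟫ (0 : ℝ) :=
    HasGradientAt.hasDerivAt_comp_s7 (by simpa using hx) AffineMap.hasDerivAt_lineMap
  have := (hf.comp_affineMap (AffineMap.lineMap x w)).le_slope_of_hasDerivAt (mem_univ _)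
    (mem_univ _) zero_lt_one hline
  simp [slope] at this
  linarith

theorem ConvexOn.inner_smul_sub_smul_add_le {f : H → ℝ} {x g p C : H} {a b : ℝ}
    (hf : ConvexOn ℝ univ f) (hx : HasGradientAt f g x) (ha : 0 ≤ a) (hb : 0 ≤ b) :
    ⟪a • C - b • g, x - p⟫ + b * (f x - f p) ≤ a * ‖C‖ * ‖x - p‖ := by
  have hgrad : f x - f p ≤ ⟪g, x - p⟫ := by
    have := hf.add_inner_sub_le hx p
    rw [← neg_sub x p, inner_neg_right] at this
    linarith
  have hC : ⟪C, x - p⟫ ≤ ‖C‖ * ‖x - p‖ := real_inner_le_norm _ _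
  rw [inner_sub_left, real_inner_smul_left, real_inner_smul_left]
  nlinarith [mul_le_mul_of_nonneg_left hgrad hb, mul_le_mul_of_nonneg_left hC ha]

theorem ConvexOn.le_of_tendsto_inner {ι : Type*} {l : Filter ι} [l.NeBot] {f : H → ℝ}
    {g p : H} {x : ι → H} {c : ℝ} (hf : ConvexOn ℝ univ f) (hp : HasGradientAt f g p)
    (hx : ∀ v, Tendsto (fun i => ⟪x i, v⟫) l (𝓝 ⟪p, v⟫))
    (hfx : Tendsto (fun i => f (x i)) l (𝓝 c)) : f p ≤ c := by
  have hlow : Tendsto (fun i => f p + ⟪g, x i - p⟫) l (𝓝 (f p)) := by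
    simpa [inner_sub_right, real_inner_comm g] using
      tendsto_const_nhds.add ((hx g).sub_const ⟪p, g⟫)
  exact le_of_tendsto_of_tendsto' hlow hfx fun i => hf.add_inner_sub_le hp (x i)

theorem Ultrafilter.exists_forall_tendsto_inner_of_norm_le {ι : Type*} {U : Ultrafilter ι}
    {x : ι → H} {M : ℝ} (hx : ∀ᶠ i in U, ‖x i‖ ≤ M) :
    ∃ p : H, ∀ v, Tendsto (fun i => ⟪x i, v⟫) U (𝓝 ⟪p, v⟫) := by
  have hbdd : ∀ v, ∀ᶠ i in U, |⟪x i, v⟫| ≤ M * ‖v‖ := fun v => hx.mono fun i hi =>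
    (abs_real_inner_le_norm _ _).trans (mul_le_mul_of_nonneg_right hi (norm_nonneg v))
  have hlim : ∀ v, ∃ L, Tendsto (fun i => ⟪x i, v⟫) U (𝓝 L) := fun v => by
    obtain ⟨L, -, hL⟩ := isCompact_Icc.ultrafilter_le_nhds (U.map fun i => ⟪x i, v⟫)
      (le_principal_iff.2 <| (hbdd v).mono fun i hi => abs_le.1 hi)
    exact ⟨L, hL⟩
  choose L hL using hlim
  let φ : H →L[ℝ] ℝ := LinearMap.mkContinuous
    { toFun := L
      map_add' := fun v w => tendsto_nhds_unique (hL (v + w))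
        (by simpa only [inner_add_right] using (hL v).add (hL w))
      map_smul' := fun r v => tendsto_nhds_unique (hL (r • v))
        (by simpa only [real_inner_smul_right, RingHom.id_apply, smul_eq_mul] using
          (hL v).const_mul r) }
    M fun v => le_of_tendsto (hL v).norm (hbdd v)
  refine ⟨(InnerProductSpace.toDual ℝ H).symm φ, fun v => ?_⟩
  rw [InnerProductSpace.toDual_symm_apply]
  exact hL v

theorem exists_mem_forall_tendsto_inner_of_opial {ι : Type*} {l : Filter ι} [l.NeBot]
    {x : ι → H} {S : Set H} {M : ℝ} (hbdd : ∀ᶠ i in l, ‖x i‖ ≤ M)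
    (hdist : ∀ p ∈ S, ∃ r, Tendsto (fun i => ‖x i - p‖ ^ 2) l (𝓝 r))
    (hclust : ∀ (U : Ultrafilter ι) (p : H), ↑U ≤ l →
      (∀ v, Tendsto (fun i => ⟪x i, v⟫) U (𝓝 ⟪p, v⟫)) → p ∈ S) :
    ∃ p ∈ S, ∀ v, Tendsto (fun i => ⟪x i, v⟫) l (𝓝 ⟪p, v⟫) := by
  have huniq : ∀ (U V : Ultrafilter ι) (p q : H), ↑U ≤ l → ↑V ≤ l →
      (∀ v, Tendsto (fun i => ⟪x i, v⟫) U (𝓝 ⟪p, v⟫)) →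
      (∀ v, Tendsto (fun i => ⟪x i, v⟫) V (𝓝 ⟪q, v⟫)) → p = q := by
    intro U V p q hU hV hpU hqV
    obtain ⟨r, hr⟩ := hdist p (hclust U p hU hpU)
    obtain ⟨r', hr'⟩ := hdist q (hclust V q hV hqV)
    have hpq : Tendsto (fun i => ⟪x i, p - q⟫) l
        (𝓝 ((r' - r + (‖p‖ ^ 2 - ‖q‖ ^ 2)) / 2)) := by
      refine (((hr'.sub hr).add_const (‖p‖ ^ 2 - ‖q‖ ^ 2)).div_const 2).congr fun i => ?_
      rw [inner_sub_right, norm_sub_sq_real, norm_sub_sq_real]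
      ring
    have h1 := tendsto_nhds_unique (hpU (p - q)) (hpq.mono_left hU)
    have h2 := tendsto_nhds_unique (hqV (p - q)) (hpq.mono_left hV)
    rw [← sub_eq_zero, ← inner_self_eq_zero (𝕜 := ℝ), inner_sub_left, h1, h2, sub_self]
  have hweak : ∀ U : Ultrafilter ι, ↑U ≤ l →
      ∃ p, ∀ v, Tendsto (fun i => ⟪x i, v⟫) U (𝓝 ⟪p, v⟫) := fun U hU =>
    Ultrafilter.exists_forall_tendsto_inner_of_norm_le (hU hbdd)
  obtain ⟨p, hp⟩ := hweak _ (Ultrafilter.of_le l)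
  refine ⟨p, hclust _ p (Ultrafilter.of_le l) hp, fun v => ?_⟩
  refine (tendsto_iff_ultrafilter _ _ _).2 fun U hU => ?_
  obtain ⟨q, hq⟩ := hweak U hU
  rw [huniq _ _ p q (Ultrafilter.of_le l) hU hp hq]
  exact hq v

end InnerProductSpace

section ScaledGradientFlow

variable {H : Type*} [NormedAddCommGroup H]

noncomputable def anchorEnergy (y : ℝ → H) (p : H) (α K s : ℝ) : ℝ :=
  ‖y s - p‖ ^ 2 / 2 + K / (α - 1) * s ^ (1 - α)

noncomputable def valueEnergy (f : H → ℝ) (y : ℝ → H) (p C : H) (α s : ℝ) : ℝ :=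
  s ^ 2 * (f (y s) - f p) + (α + 1) * ‖C‖ ^ 2 / (4 * (α - 1)) * s ^ (2 - 2 * α)

theorem anchorEnergy_nonneg (y : ℝ → H) (p : H) {α K s : ℝ} (hα : 1 < α) (hK : 0 ≤ K)
    (hs : 0 ≤ s) : 0 ≤ anchorEnergy y p α K s :=
  add_nonneg (by positivity)
    (mul_nonneg (div_nonneg hK (by linarith)) (Real.rpow_nonneg hs _))

variable [InnerProductSpace ℝ H]

structure IsScaledGradientFlow (f' : H → H) (α s0 : ℝ) (C : H) (y y' : ℝ → H) : Prop where
  hasDerivAt : ∀ s ∈ Ici s0, HasDerivAt y (y' s) s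
  deriv_eq : ∀ s ∈ Ici s0, y' s = s ^ (-α) • C - (s / (α + 1)) • f' (y s)
  continuousOn_grad : ContinuousOn (fun s => f' (y s)) (Ici s0)

namespace IsScaledGradientFlow

variable {f : H → ℝ} {f' : H → H} {α s0 : ℝ} {C p : H} {y y' : ℝ → H}

theorem hasDerivAt_anchorEnergy (hT : IsScaledGradientFlow f' α s0 C y y') (hα : α ≠ 1)
    (hs0 : 0 < s0) (K : ℝ) {s : ℝ} (hs : s ∈ Ici s0) :
    HasDerivAt (anchorEnergy y p α K) (⟪y s - p, y' s⟫ - K * s ^ (-α)) s := by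
  refine ((((hT.hasDerivAt s hs).sub_const p).norm_sq.div_const 2).add
    ((Real.hasDerivAt_rpow_const (p := 1 - α) (Or.inl (hs0.trans_le hs).ne')).const_mul
      (K / (α - 1)))).congr_deriv ?_
  rw [show 1 - α - 1 = -α by ring]
  field_simp [sub_ne_zero.2 hα]
  ring

theorem sq_mul_inner_grad_deriv_add_le (hT : IsScaledGradientFlow f' α s0 C y y')
    (hα : 0 < α + 1) (hs0 : 0 < s0) {s : ℝ} (hs : s ∈ Ici s0) :
    s ^ 2 * ⟪f' (y s), y' s⟫ + s ^ 3 * ‖f' (y s)‖ ^ 2 / (2 * (α + 1))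
      ≤ (α + 1) / 2 * ‖C‖ ^ 2 * s ^ (1 - 2 * α) := by
  have hspos : 0 < s := hs0.trans_le hs
  have h := inner_smul_sub_smul_le (f' (y s)) C (s ^ (-α)) (div_pos hspos hα)
  rw [← hT.deriv_eq s hs] at h
  have e : s ^ 2 * ((s ^ (-α)) ^ 2 * ‖C‖ ^ 2 / (2 * (s / (α + 1)))
        - s / (α + 1) / 2 * ‖f' (y s)‖ ^ 2)
      = (α + 1) / 2 * ‖C‖ ^ 2 * (s * (s ^ (-α)) ^ 2)
        - s ^ 3 * ‖f' (y s)‖ ^ 2 / (2 * (α + 1)) := by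
    field_simp
  rw [Real.rpow_one_sub_two_mul hspos]
  linarith [mul_le_mul_of_nonneg_left h (sq_nonneg s)]

theorem continuousOn_deriv (hT : IsScaledGradientFlow f' α s0 C y y') (hs0 : 0 < s0) :
    ContinuousOn y' (Ici s0) :=
  (((continuousOn_id.rpow_const fun _ hs => Or.inl (hs0.trans_le hs).ne').smul
    continuousOn_const).sub ((continuousOn_id.div_const _).smul hT.continuousOn_grad)).congr
    hT.deriv_eq

variable [CompleteSpace H]

theorem continuousOn_value (hT : IsScaledGradientFlow f' α s0 C y y')
    (hgrad : ∀ x, HasGradientAt f (f' x) x) : ContinuousOn (fun s => f (y s)) (Ici s0) :=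
  fun s hs => ((hgrad (y s)).hasFDerivAt.continuousAt.comp
    (hT.hasDerivAt s hs).continuousAt).continuousWithinAt

theorem inner_deriv_add_le (hT : IsScaledGradientFlow f' α s0 C y y') (hf : ConvexOn ℝ univ f)
    (hgrad : ∀ x, HasGradientAt f (f' x) x) (hα : 0 < α + 1) (hs0 : 0 ≤ s0) {s : ℝ}
    (hs : s ∈ Ici s0) :
    ⟪y s - p, y' s⟫ + s / (α + 1) * (f (y s) - f p) ≤ s ^ (-α) * ‖C‖ * ‖y s - p‖ := by
  rw [real_inner_comm, hT.deriv_eq s hs]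
  exact hf.inner_smul_sub_smul_add_le (hgrad _) (Real.rpow_nonneg (hs0.trans hs) _)
    (div_nonneg (hs0.trans hs) hα.le)

theorem exists_norm_sub_le (hT : IsScaledGradientFlow f' α s0 C y y') (hf : ConvexOn ℝ univ f)
    (hgrad : ∀ x, HasGradientAt f (f' x) x) (hα : 1 < α) (hs0 : 0 < s0)
    (hp : ∀ v, f p ≤ f v) : ∃ M, ∀ s ∈ Ici s0, ‖y s - p‖ ≤ M := by
  have hroot : ∀ s, ‖y s - p‖ ≤ √(‖y s - p‖ ^ 2 + 1) := fun s =>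
    Real.le_sqrt_of_sq_le (by linarith)
  -- `√(‖y - p‖² + 1)` is used in place of the non-differentiable `‖y - p‖`
  have hA : ∀ s ∈ Ici s0, HasDerivAt (fun s => √(‖y s - p‖ ^ 2 + 1) + ‖C‖ / (α - 1) * s ^ (1 - α))
      (2 * ⟪y s - p, y' s⟫ / (2 * √(‖y s - p‖ ^ 2 + 1))
        + ‖C‖ / (α - 1) * ((1 - α) * s ^ (1 - α - 1))) s := fun s hs =>
    ((((hT.hasDerivAt s hs).sub_const p).norm_sq.add_const 1).sqrt (by positivity)).add
      ((Real.hasDerivAt_rpow_const (Or.inl (hs0.trans_le hs).ne')).const_mul _)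
  have hA' : ∀ s ∈ Ici s0, 2 * ⟪y s - p, y' s⟫ / (2 * √(‖y s - p‖ ^ 2 + 1))
      + ‖C‖ / (α - 1) * ((1 - α) * s ^ (1 - α - 1)) + 0 ≤ 0 := by
    intro s hs
    have hinner : ⟪y s - p, y' s⟫ ≤ s ^ (-α) * ‖C‖ * √(‖y s - p‖ ^ 2 + 1) := by
      have := hT.inner_deriv_add_le hf hgrad (p := p) (by linarith) hs0.le hs
      have : 0 ≤ s / (α + 1) * (f (y s) - f p) :=
        mul_nonneg (div_nonneg (hs0.le.trans hs) (by linarith)) (sub_nonneg.2 (hp _))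
      have : s ^ (-α) * ‖C‖ * ‖y s - p‖ ≤ s ^ (-α) * ‖C‖ * √(‖y s - p‖ ^ 2 + 1) :=
        mul_le_mul_of_nonneg_left (hroot s)
          (mul_nonneg (Real.rpow_nonneg (hs0.le.trans hs) _) (norm_nonneg C))
      linarith
    have hrpow : ‖C‖ / (α - 1) * ((1 - α) * s ^ (1 - α - 1)) = -(s ^ (-α) * ‖C‖) := by
      rw [show 1 - α - 1 = -α by ring]
      field_simp [show α - 1 ≠ 0 by linarith]
      ring
    rw [hrpow, add_zero, mul_div_mul_left _ _ two_ne_zero]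
    linarith [div_le_of_le_mul₀ (Real.sqrt_nonneg _)
      (mul_nonneg (Real.rpow_nonneg (hs0.le.trans hs) _) (norm_nonneg C)) hinner]
  refine ⟨√(‖y s0 - p‖ ^ 2 + 1) + ‖C‖ / (α - 1) * s0 ^ (1 - α), fun s hs => ?_⟩
  have hle := add_intervalIntegral_le_of_hasDerivAt (B := fun _ => 0) hs
    (fun t ht => hA t ht.1) continuousOn_const (fun t ht => hA' t ht.1)
  have hterm : 0 ≤ ‖C‖ / (α - 1) * s ^ (1 - α) :=
    mul_nonneg (div_nonneg (norm_nonneg _) (by linarith)) (Real.rpow_nonneg (hs0.le.trans hs) _)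
  simp only [intervalIntegral.integral_zero, add_zero] at hle
  linarith [hroot s]

theorem inner_deriv_sub_add_le (hT : IsScaledGradientFlow f' α s0 C y y')
    (hf : ConvexOn ℝ univ f) (hgrad : ∀ x, HasGradientAt f (f' x) x) (hα : 0 < α + 1)
    (hs0 : 0 ≤ s0) {M : ℝ} (hM : ∀ s ∈ Ici s0, ‖y s - p‖ ≤ M) {s : ℝ} (hs : s ∈ Ici s0) :
    ⟪y s - p, y' s⟫ - M * ‖C‖ * s ^ (-α) + (α + 1)⁻¹ * (s * (f (y s) - f p)) ≤ 0 := by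
  have h := hT.inner_deriv_add_le hf hgrad (p := p) hα hs0 hs
  have hM' : s ^ (-α) * ‖C‖ * ‖y s - p‖ ≤ s ^ (-α) * ‖C‖ * M :=
    mul_le_mul_of_nonneg_left (hM s hs)
      (mul_nonneg (Real.rpow_nonneg (hs0.trans hs) _) (norm_nonneg C))
  have hdiv : (α + 1)⁻¹ * (s * (f (y s) - f p)) = s / (α + 1) * (f (y s) - f p) := by ring
  linarith

theorem integrableOn_mul_sub (hT : IsScaledGradientFlow f' α s0 C y y')
    (hf : ConvexOn ℝ univ f) (hgrad : ∀ x, HasGradientAt f (f' x) x) (hα : 1 < α)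
    (hs0 : 0 < s0) (hp : ∀ v, f p ≤ f v) :
    IntegrableOn (fun s => s * (f (y s) - f p)) (Ici s0) := by
  obtain ⟨M, hM⟩ := hT.exists_norm_sub_le hf hgrad hα hs0 hp
  have hK : 0 ≤ M * ‖C‖ := mul_nonneg ((norm_nonneg _).trans (hM s0 self_mem_Ici)) (norm_nonneg C)
  have hB := integrableOn_Ici_of_hasDerivAt_add_le_s7
    (B := fun s => (α + 1)⁻¹ * (s * (f (y s) - f p)))
    (fun s hs => hT.hasDerivAt_anchorEnergy hα.ne' hs0 (M * ‖C‖) hs)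
    (fun s hs => anchorEnergy_nonneg y p hα hK (hs0.le.trans hs))
    (continuousOn_const.mul (continuousOn_id.mul
      ((hT.continuousOn_value hgrad).sub continuousOn_const)))
    (fun s hs => mul_nonneg (inv_nonneg.2 (by linarith))
      (mul_nonneg (hs0.le.trans hs) (sub_nonneg.2 (hp _))))
    (fun s hs => hT.inner_deriv_sub_add_le hf hgrad (by linarith) hs0.le hM hs)
  refine IntegrableOn.congr_fun (hB.const_mul (α + 1)) (fun s _ => ?_) measurableSet_Ici
  field_simp [show α + 1 ≠ 0 by linarith]

theorem exists_tendsto_norm_sub_sq (hT : IsScaledGradientFlow f' α s0 C y y')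
    (hf : ConvexOn ℝ univ f) (hgrad : ∀ x, HasGradientAt f (f' x) x) (hα : 1 < α)
    (hs0 : 0 < s0) (hp : ∀ v, f p ≤ f v) :
    ∃ r, Tendsto (fun s => ‖y s - p‖ ^ 2) atTop (𝓝 r) := by
  obtain ⟨M, hM⟩ := hT.exists_norm_sub_le hf hgrad hα hs0 hp
  have hK : 0 ≤ M * ‖C‖ := mul_nonneg ((norm_nonneg _).trans (hM s0 self_mem_Ici)) (norm_nonneg C)
  obtain ⟨l, hl⟩ := exists_tendsto_of_hasDerivAt_add_le
    (B := fun s => (α + 1)⁻¹ * (s * (f (y s) - f p)))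
    (fun s hs => hT.hasDerivAt_anchorEnergy hα.ne' hs0 (M * ‖C‖) hs)
    (fun s hs => anchorEnergy_nonneg y p hα hK (hs0.le.trans hs))
    (continuousOn_const.mul (continuousOn_id.mul
      ((hT.continuousOn_value hgrad).sub continuousOn_const)))
    ((hT.integrableOn_mul_sub hf hgrad hα hs0 hp).const_mul _)
    (fun s hs => hT.inner_deriv_sub_add_le hf hgrad (by linarith) hs0.le hM hs)
  have hdecay : Tendsto (fun s : ℝ => M * ‖C‖ / (α - 1) * s ^ (1 - α)) atTop (𝓝 0) := by
    simpa [neg_sub] using (tendsto_rpow_neg_atTop (sub_pos.2 hα)).const_mul (M * ‖C‖ / (α - 1))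
  refine ⟨2 * (l - 0), ((hl.sub hdecay).const_mul 2).congr fun s => ?_⟩
  simp only [anchorEnergy]
  ring

theorem hasDerivAt_valueEnergy (hT : IsScaledGradientFlow f' α s0 C y y')
    (hgrad : ∀ x, HasGradientAt f (f' x) x) (hα : α ≠ 1) (hs0 : 0 < s0) {s : ℝ}
    (hs : s ∈ Ici s0) :
    HasDerivAt (valueEnergy f y p C α) (2 * s * (f (y s) - f p) + s ^ 2 * ⟪f' (y s), y' s⟫
      - (α + 1) / 2 * ‖C‖ ^ 2 * s ^ (1 - 2 * α)) s := by
  refine (((hasDerivAt_pow 2 s).mul (((hgrad (y s)).hasDerivAt_comp_s7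
    (hT.hasDerivAt s hs)).sub_const (f p))).add
    ((Real.hasDerivAt_rpow_const (p := 2 - 2 * α) (Or.inl (hs0.trans_le hs).ne')).const_mul
      _)).congr_deriv ?_
  rw [show 2 - 2 * α - 1 = 1 - 2 * α by ring]
  field_simp [sub_ne_zero.2 hα]
  ring

theorem integrableOn_pow_three_mul_norm_sq (hT : IsScaledGradientFlow f' α s0 C y y')
    (hf : ConvexOn ℝ univ f) (hgrad : ∀ x, HasGradientAt f (f' x) x) (hα : 1 < α)
    (hs0 : 0 < s0) (hp : ∀ v, f p ≤ f v) :
    IntegrableOn (fun s => s ^ 3 * ‖f' (y s)‖ ^ 2) (Ici s0) := by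
  obtain ⟨M, hM⟩ := hT.exists_norm_sub_le hf hgrad hα hs0 hp
  have hK : 0 ≤ M * ‖C‖ := mul_nonneg ((norm_nonneg _).trans (hM s0 self_mem_Ici)) (norm_nonneg C)
  -- `2 (α + 1)` times the anchor energy absorbs the term `2 s (f (y s) - f p)` in the
  -- derivative of the value energy
  have hB := integrableOn_Ici_of_hasDerivAt_add_le_s7
    (A := fun s => valueEnergy f y p C α s + 2 * (α + 1) * anchorEnergy y p α (M * ‖C‖) s)
    (B := fun s => s ^ 3 * ‖f' (y s)‖ ^ 2 / (2 * (α + 1)))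
    (fun s hs => (hT.hasDerivAt_valueEnergy hgrad hα.ne' hs0 hs).add
      ((hT.hasDerivAt_anchorEnergy hα.ne' hs0 (M * ‖C‖) hs).const_mul (2 * (α + 1))))
    (fun s hs => add_nonneg
      (add_nonneg (mul_nonneg (sq_nonneg s) (sub_nonneg.2 (hp _)))
        (mul_nonneg (div_nonneg (by positivity) (by linarith))
          (Real.rpow_nonneg (hs0.le.trans hs) _)))
      (mul_nonneg (by linarith) (anchorEnergy_nonneg y p hα hK (hs0.le.trans hs))))
    ((((continuousOn_id.pow 3).mul (hT.continuousOn_grad.norm.pow 2))).div_const _)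
    (fun s hs => div_nonneg (mul_nonneg (pow_nonneg (hs0.le.trans hs) 3) (sq_nonneg _))
      (by linarith))
    (fun s hs => by
      have h1 := hT.sq_mul_inner_grad_deriv_add_le (by linarith) hs0 hs
      have h2 := hT.inner_deriv_sub_add_le hf hgrad (by linarith) hs0.le hM hs
      have h3 : 2 * (α + 1) * ((α + 1)⁻¹ * (s * (f (y s) - f p)))
          = 2 * (s * (f (y s) - f p)) := by
        field_simp [show α + 1 ≠ 0 by linarith]
      nlinarith)
  refine IntegrableOn.congr_fun (hB.const_mul (2 * (α + 1))) (fun s _ => ?_) measurableSet_Ici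
  field_simp [show α + 1 ≠ 0 by linarith]

theorem tendsto_sq_mul_sub (hT : IsScaledGradientFlow f' α s0 C y y')
    (hf : ConvexOn ℝ univ f) (hgrad : ∀ x, HasGradientAt f (f' x) x) (hα : 1 < α)
    (hs0 : 0 < s0) (hp : ∀ v, f p ≤ f v) :
    Tendsto (fun s => s ^ 2 * (f (y s) - f p)) atTop (𝓝 0) := by
  have hint := hT.integrableOn_mul_sub hf hgrad hα hs0 hp
  obtain ⟨l, hl⟩ := exists_tendsto_of_hasDerivAt_add_le
    (B := fun s => -(2 * (s * (f (y s) - f p))))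
    (fun s hs => hT.hasDerivAt_valueEnergy hgrad hα.ne' hs0 hs)
    (fun s hs => add_nonneg (mul_nonneg (sq_nonneg s) (sub_nonneg.2 (hp _)))
      (mul_nonneg (div_nonneg (by positivity) (by linarith))
        (Real.rpow_nonneg (hs0.le.trans hs) _)))
    ((continuousOn_id.mul ((hT.continuousOn_value hgrad).sub continuousOn_const)).const_mul
      2).neg
    (hint.const_mul 2).neg
    (fun s hs => by
      have := hT.sq_mul_inner_grad_deriv_add_le (by linarith) hs0 hs
      have : 0 ≤ s ^ 3 * ‖f' (y s)‖ ^ 2 / (2 * (α + 1)) :=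
        div_nonneg (mul_nonneg (pow_nonneg (hs0.le.trans hs) 3) (sq_nonneg _)) (by linarith)
      linarith)
  have hdecay : Tendsto (fun s : ℝ => (α + 1) * ‖C‖ ^ 2 / (4 * (α - 1)) * s ^ (2 - 2 * α))
      atTop (𝓝 0) := by
    simpa [show 2 - 2 * α = -(2 * (α - 1)) by ring] using
      (tendsto_rpow_neg_atTop (by linarith : 0 < 2 * (α - 1))).const_mul
        ((α + 1) * ‖C‖ ^ 2 / (4 * (α - 1)))
  have hlim : Tendsto (fun s => s ^ 2 * (f (y s) - f p)) atTop (𝓝 l) := by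
    simpa [valueEnergy] using hl.sub hdecay
  rwa [eq_zero_of_tendsto_mul_of_integrableOn_s7 (hlim.congr fun s => by ring) hint] at hlim

theorem integrableOn_mul_norm_deriv_sq (hT : IsScaledGradientFlow f' α s0 C y y')
    (hf : ConvexOn ℝ univ f) (hgrad : ∀ x, HasGradientAt f (f' x) x) (hα : 1 < α)
    (hs0 : 0 < s0) (hp : ∀ v, f p ≤ f v) :
    IntegrableOn (fun s => s * ‖y' s‖ ^ 2) (Ici s0) := by
  have hdecay : IntegrableOn (fun s : ℝ => s ^ (1 - 2 * α)) (Ici s0) := by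
    rw [integrableOn_Ici_iff_integrableOn_Ioi]
    exact (integrableOn_Ioi_rpow_iff hs0).2 (by linarith)
  refine Integrable.mono' ((hdecay.const_mul (2 * ‖C‖ ^ 2)).add
    ((hT.integrableOn_pow_three_mul_norm_sq hf hgrad hα hs0 hp).const_mul (2 / (α + 1) ^ 2)))
    ((continuousOn_id.mul ((hT.continuousOn_deriv hs0).norm.pow 2)).aestronglyMeasurable
      measurableSet_Ici)
    ((ae_restrict_iff' measurableSet_Ici).2 (Eventually.of_forall fun s hs => ?_))
  have hspos : 0 < s := hs0.trans_le hs
  have h := norm_smul_sub_smul_sq_le C (f' (y s)) (s ^ (-α)) (s / (α + 1))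
  rw [← hT.deriv_eq s hs] at h
  rw [Real.norm_of_nonneg (by positivity), Pi.add_apply, Real.rpow_one_sub_two_mul hspos]
  calc s * ‖y' s‖ ^ 2
      ≤ s * (2 * (s ^ (-α)) ^ 2 * ‖C‖ ^ 2 + 2 * (s / (α + 1)) ^ 2 * ‖f' (y s)‖ ^ 2) :=
        mul_le_mul_of_nonneg_left h hspos.le
    _ = _ := by field_simp

theorem exists_minimizer_tendsto_inner_sub (hT : IsScaledGradientFlow f' α s0 C y y')
    (hf : ConvexOn ℝ univ f) (hgrad : ∀ x, HasGradientAt f (f' x) x) (hα : 1 < α)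
    (hs0 : 0 < s0) (hp : ∀ v, f p ≤ f v) :
    ∃ x : H, (∀ v, f x ≤ f v) ∧ ∀ v, Tendsto (fun s => ⟪y s - x, v⟫) atTop (𝓝 0) := by
  obtain ⟨M, hM⟩ := hT.exists_norm_sub_le hf hgrad hα hs0 hp
  have hbdd : ∀ᶠ s in atTop, ‖y s‖ ≤ M + ‖p‖ :=
    (eventually_ge_atTop s0).mono fun s hs =>
      (norm_le_norm_sub_add (y s) p).trans (by linarith [hM s hs])
  have hvalue : Tendsto (fun s => f (y s)) atTop (𝓝 (f p)) := by
    have hsub : Tendsto (fun s => f (y s) - f p) atTop (𝓝 0) :=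
      tendsto_of_tendsto_of_tendsto_of_le_of_le' tendsto_const_nhds
        (hT.tendsto_sq_mul_sub hf hgrad hα hs0 hp)
        (Eventually.of_forall fun s => sub_nonneg.2 (hp _))
        ((eventually_ge_atTop 1).mono fun s hs =>
          le_mul_of_one_le_left (sub_nonneg.2 (hp _)) (one_le_pow₀ hs))
    simpa using hsub.add_const (f p)
  obtain ⟨x, hx, hlim⟩ := exists_mem_forall_tendsto_inner_of_opial (S := {x | ∀ v, f x ≤ f v})
    hbdd (fun q hq => hT.exists_tendsto_norm_sub_sq hf hgrad hα hs0 hq)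
    (fun U q hU hq v => (hf.le_of_tendsto_inner (hgrad q) hq (hvalue.mono_left hU)).trans (hp v))
  refine ⟨x, hx, fun v => ?_⟩
  simpa [inner_sub_left] using (hlim v).sub_const ⟪x, v⟫

end IsScaledGradientFlow

end ScaledGradientFlow

theorem explicit_hessian_damping_estimates_and_convergence_general
    {H : Type*} [NormedAddCommGroup H] [InnerProductSpace ℝ H] [CompleteSpace H]
    (f : H → ℝ) (f' : H → H)
    (hconv : ConvexOn ℝ Set.univ f)
    (hgrad : ∀ x, HasGradientAt f (f' x) x)
    (hmin : ∃ z, ∀ v, f z ≤ f v)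
    (α s0 : ℝ) (hα : 1 < α) (hs0 : 0 < s0)
    (y y' y'' G' : ℝ → H)
    (hy : ∀ s ∈ Ici s0, HasDerivAt y (y' s) s)
    (hy' : ∀ s ∈ Ici s0, HasDerivAt y' (y'' s) s)
    (hG : ∀ s ∈ Ici s0, HasDerivAt (fun u => f' (y u)) (G' s) s)
    (heq : ∀ s ∈ Ici s0,
      y'' s + (α / s) • y' s + (s / (α + 1)) • G' s + f' (y s) = 0) :
    IntegrableOn (fun s => s * ‖y' s‖ ^ 2) (Ici s0) ∧
    IntegrableOn (fun s => s * (f (y s) - ⨅ v, f v)) (Ici s0) ∧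
    IntegrableOn (fun s => s ^ 3 * ‖f' (y s)‖ ^ 2) (Ici s0) ∧
    Tendsto (fun s => s ^ 2 * (f (y s) - ⨅ v, f v)) atTop (nhds 0) ∧
    ∃ xstar : H, (∀ v, f xstar ≤ f v) ∧
      ∀ v : H, Tendsto (fun s => ⟪y s - xstar, v⟫) atTop (nhds 0) := by
  obtain ⟨z, hz⟩ := hmin
  obtain ⟨C, hC⟩ := exists_eq_rpow_smul_sub_of_hasDerivAt (by linarith) hs0 hy' hG heq
  have hT : IsScaledGradientFlow f' α s0 C y y' :=
    ⟨hy, hC, fun s hs => (hG s hs).continuousAt.continuousWithinAt⟩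
  have hinf : ⨅ v, f v = f z :=
    le_antisymm (ciInf_le ⟨f z, forall_mem_range.2 hz⟩ z) (le_ciInf hz)
  rw [hinf]
  exact ⟨hT.integrableOn_mul_norm_deriv_sq hconv hgrad hα hs0 hz,
    hT.integrableOn_mul_sub hconv hgrad hα hs0 hz,
    hT.integrableOn_pow_three_mul_norm_sq hconv hgrad hα hs0 hz,
    hT.tendsto_sq_mul_sub hconv hgrad hα hs0 hz,
    hT.exists_minimizer_tendsto_inner_sub hconv hgrad hα hs0 hz⟩

/-- Explicit Hessian driven damping (`α > 1`): integral estimates, o(1/s²) convergence of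
the values, and weak convergence of the trajectory towards a minimizer of `f`. -/
theorem explicit_hessian_damping_estimates_and_convergence
    {H : Type*} [NormedAddCommGroup H] [InnerProductSpace ℝ H] [CompleteSpace H]
    (f : H → ℝ) (f' : H → H)
    (hconv : ConvexOn ℝ Set.univ f)
    (hgrad : ∀ x, HasGradientAt f (f' x) x)
    (hlip : ∀ s : Set H, Bornology.IsBounded s → ∃ K : NNReal, LipschitzOnWith K f' s)
    (hmin : ∃ z, ∀ v, f z ≤ f v)
    (α s0 : ℝ) (hα : 1 < α) (hs0 : 0 < s0)
    (y y' y'' G' : ℝ → H)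
    (hy : ∀ s ∈ Ici s0, HasDerivAt y (y' s) s)
    (hy' : ∀ s ∈ Ici s0, HasDerivAt y' (y'' s) s)
    (hy''cont : ContinuousOn y'' (Ici s0))
    (hG : ∀ s ∈ Ici s0, HasDerivAt (fun u => f' (y u)) (G' s) s)
    (heq : ∀ s ∈ Ici s0,
      y'' s + (α / s) • y' s + (s / (α + 1)) • G' s + f' (y s) = 0) :
    IntegrableOn (fun s => s * ‖y' s‖ ^ 2) (Ici s0) ∧
    IntegrableOn (fun s => s * (f (y s) - ⨅ v, f v)) (Ici s0) ∧
    IntegrableOn (fun s => s ^ 3 * ‖f' (y s)‖ ^ 2) (Ici s0) ∧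
    Tendsto (fun s => s ^ 2 * (f (y s) - ⨅ v, f v)) atTop (nhds 0) ∧
    ∃ xstar : H, (∀ v, f xstar ≤ f v) ∧
      ∀ v : H, Tendsto (fun s => ⟪y s - xstar, v⟫) atTop (nhds 0) :=
  explicit_hessian_damping_estimates_and_convergence_general f f' hconv hgrad hmin α s0 hα hs0 y y'
    y'' G' hy hy' hG heq
end

section
/- Let f : H → ℝ be convex and lower semicontinuous with argmin_H f nonempty, and let α > 1. Define the step sizes by s_0 = 0 and s_{k+1} = (α − 1 + √((α−1)² + 4s_k²))/2 for k ≥ 0 (equivalently, s_{k+1} > 0 and s_{k+1}² − (α−1)s_{k+1} = s_k²). Let (y_k)_{k≥0} ⊆ H and (η_k)_{k≥1} ⊆ H be sequences such that for every k ≥ 0, η_{k+1} is a subgradient of f at y_{k+1} (i.e., f(z) ≥ f(y_{k+1}) + ⟨η_{k+1}, z − y_{k+1}⟩ for all z ∈ H) and y_{k+1} = y_k − (s_{k+1}/(α−1))·η_{k+1} (the proximal step y_{k+1} = prox_{(s_{k+1}/(α−1)) f}(y_k)). Then Σ_{k≥0} s_k·(f(y_k) − inf_H f) < ∞ and Σ_{k≥1}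 s_k²·‖η_k‖² < ∞. -/
open scoped RealInnerProductSpace

/-!
Fix a minimizer `z` of `f`. Expanding `‖y_k - z‖²` around `y_{k+1}` and using the subgradient
inequality at `z`, each proximal step with parameter `t_k = s_{k+1}/(α-1) ≥ 0` satisfies
`2 t_k (f y_{k+1} - min f) + t_k² ‖η_{k+1}‖² ≤ ‖y_k - z‖² - ‖y_{k+1} - z‖²`.
Both series are therefore dominated by a telescoping sum bounded by `‖y_0 - z‖²`.
-/

theorem summable_of_nonneg_of_le_sub_succ {a e : ℕ → ℝ} (ha : ∀ k, 0 ≤ a k)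
    (he : ∀ k, 0 ≤ e k) (hae : ∀ k, a k ≤ e k - e (k + 1)) : Summable a := by
  refine summable_of_sum_range_le (c := e 0) ha fun n => ?_
  calc ∑ k ∈ Finset.range n, a k ≤ ∑ k ∈ Finset.range n, (e k - e (k + 1)) :=
        Finset.sum_le_sum fun k _ => hae k
    _ = e 0 - e n := Finset.sum_range_sub' e n
    _ ≤ e 0 := sub_le_self _ (he n)

section SubgradientStep

variable {E : Type*} [NormedAddCommGroup E] [InnerProductSpace ℝ E] {f : E → ℝ}

theorem subgradient_step_descent {x x' g z : E} {t : ℝ} (ht : 0 ≤ t)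
    (hg : f x' + ⟪g, z - x'⟫ ≤ f z) (hx' : x' = x - t • g) :
    2 * t * (f x' - f z) + t ^ 2 * ‖g‖ ^ 2 ≤ ‖x - z‖ ^ 2 - ‖x' - z‖ ^ 2 := by
  have hexpand : ‖x - z‖ ^ 2 = ‖x' - z‖ ^ 2 + 2 * (t * ⟪g, x' - z⟫) + t ^ 2 * ‖g‖ ^ 2 := by
    rw [show x - z = (x' - z) + t • g by rw [hx']; abel, norm_add_sq_real,
      real_inner_smul_right, real_inner_comm, norm_smul, mul_pow, Real.norm_eq_abs, sq_abs]
  have hinner : f x' - f z ≤ ⟪g, x' - z⟫ := by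
    rw [← neg_sub x' z, inner_neg_right] at hg
    linarith
  nlinarith [mul_le_mul_of_nonneg_left hinner ht]

theorem summable_of_subgradient_steps {y η : ℕ → E} {t : ℕ → ℝ} {z : E}
    (hz : ∀ w, f z ≤ f w) (ht : ∀ k, 0 ≤ t k)
    (hsub : ∀ k, f (y (k + 1)) + ⟪η (k + 1), z - y (k + 1)⟫ ≤ f z)
    (hstep : ∀ k, y (k + 1) = y k - t k • η (k + 1)) :
    Summable (fun k => t k * (f (y (k + 1)) - f z)) ∧
      Summable (fun k => t k ^ 2 * ‖η (k + 1)‖ ^ 2) := by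
  have hdescent k := subgradient_step_descent (ht k) (hsub k) (hstep k)
  have hgap k : 0 ≤ t k * (f (y (k + 1)) - f z) := mul_nonneg (ht k) (sub_nonneg.2 (hz _))
  have hsq k : 0 ≤ t k ^ 2 * ‖η (k + 1)‖ ^ 2 := by positivity
  constructor
  · refine summable_of_nonneg_of_le_sub_succ (e := fun k => ‖y k - z‖ ^ 2 / 2) hgap
      (fun k => by positivity) fun k => ?_
    linarith [hdescent k, hsq k]
  · refine summable_of_nonneg_of_le_sub_succ (e := fun k => ‖y k - z‖ ^ 2) hsq
      (fun k => by positivity) fun k => ?_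
    linarith [hdescent k, hgap k]

end SubgradientStep

theorem proximal_algorithm_summability_general
    {H : Type*} [NormedAddCommGroup H] [InnerProductSpace ℝ H]
    (f : H → ℝ)
    (hmin : ∃ z, ∀ y, f z ≤ f y)
    (α : ℝ) (hα : 1 < α)
    (s : ℕ → ℝ)
    (hsrec : ∀ k, s (k + 1)
      = (α - 1 + Real.sqrt ((α - 1) ^ 2 + 4 * (s k) ^ 2)) / 2)
    (y η : ℕ → H)
    (hsub : ∀ k, ∀ z : H, f (y (k + 1)) + ⟪η (k + 1), z - y (k + 1)⟫ ≤ f z)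
    (hstep : ∀ k, y (k + 1) = y k - (s (k + 1) / (α - 1)) • η (k + 1)) :
    Summable (fun k => s k * (f (y k) - ⨅ v, f v)) ∧
    Summable (fun k => (s (k + 1)) ^ 2 * ‖η (k + 1)‖ ^ 2) := by
  obtain ⟨z, hz⟩ := hmin
  have hα' : 0 < α - 1 := sub_pos.2 hα
  have hinf : ⨅ v, f v = f z :=
    ciInf_eq_of_forall_ge_of_forall_gt_exists_lt hz fun _ hw => ⟨z, hw⟩
  have hs k : 0 ≤ s (k + 1) := by
    rw [hsrec k]; have := Real.sqrt_nonneg ((α - 1) ^ 2 + 4 * s k ^ 2); linarith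
  obtain ⟨hgap, hsq⟩ := summable_of_subgradient_steps hz
    (fun k => div_nonneg (hs k) hα'.le) (fun k => hsub k z) hstep
  constructor
  · rw [hinf, ← summable_nat_add_iff 1]
    refine (hgap.mul_left (α - 1)).congr fun k => ?_
    rw [← mul_assoc, mul_div_cancel₀ _ hα'.ne']
  · refine (hsq.mul_left ((α - 1) ^ 2)).congr fun k => ?_
    rw [div_pow, ← mul_assoc, mul_div_cancel₀ _ (pow_pos hα' 2).ne']

/-- Proximal algorithm for nonsmooth convex minimization: summability of weighted function
values and of weighted squared subgradient norms. -/
theorem proximal_algorithm_summability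
    {H : Type*} [NormedAddCommGroup H] [InnerProductSpace ℝ H] [CompleteSpace H]
    (f : H → ℝ)
    (hconv : ConvexOn ℝ Set.univ f)
    (hlsc : LowerSemicontinuous f)
    (hmin : ∃ z, ∀ y, f z ≤ f y)
    (α : ℝ) (hα : 1 < α)
    (s : ℕ → ℝ) (hs0 : s 0 = 0)
    (hsrec : ∀ k, s (k + 1)
      = (α - 1 + Real.sqrt ((α - 1) ^ 2 + 4 * (s k) ^ 2)) / 2)
    (y η : ℕ → H)
    (hsub : ∀ k, ∀ z : H, f (y (k + 1)) + ⟪η (k + 1), z - y (k + 1)⟫ ≤ f z)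
    (hstep : ∀ k, y (k + 1) = y k - (s (k + 1) / (α - 1)) • η (k + 1)) :
    Summable (fun k => s k * (f (y k) - ⨅ v, f v)) ∧
    Summable (fun k => (s (k + 1)) ^ 2 * ‖η (k + 1)‖ ^ 2) :=
  proximal_algorithm_summability_general f hmin α hα s hsrec y η hsub hstep
end

section
/- Let f : H → ℝ be convex and lower semicontinuous with argmin_H f nonempty, and let α > 1. Define the step sizes by s_0 = 0 and s_{k+1} = (α − 1 + √((α−1)² + 4s_k²))/2 for k ≥ 0. Let (y_k)_{k≥0} ⊆ H and (η_k)_{k≥1} ⊆ H be sequences such that for every k ≥ 0, η_{k+1} is a subgradient of f at y_{k+1} and y_{k+1} = y_k − (s_{k+1}/(α−1))·η_{k+1}. Then s_k²·(f(y_k) − inf_H f) → 0 as k → ∞ (in particular f(y_k) − inf_H f = o(1/(k+1)²), since s_k ≥ (k+1)(α−1)/2), and (y_k) converges weakly as k → ∞ to some point of S = argmin_H f, i.e., there exists x* ∈ S such that ⟨y_k − x*, v⟩ → 0 as k → ∞ for every v ∈ H. -/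
open Filter Set
open scoped Topology RealInnerProductSpace

/-!
Each iteration is an implicit proximal step `y (k+1) = y k - γ (k+1) • η (k+1)` with
`γ k = s k / (α - 1) ≥ 1`, and the subgradient inequality gives
`‖y (k+1) - x‖² + 2 γ (k+1) (f (y (k+1)) - f x) ≤ ‖y k - x‖²` for every `x`.
Telescoping at a minimizer bounds `∑ γ (k+1) (f (y (k+1)) - min f)`. The step-size recursion is
exactly `s (k+1)² - s k² = (α - 1) s (k+1)`, so this is the series
`∑ (s (k+1)² - s k²) (f (y (k+1)) - min f)`, and since the values decrease,
`s k² (f (y k) - min f) → 0`.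
The same inequality makes `y` Fejér monotone with respect to the set of minimizers. Its weak
cluster points are minimizers, because a convex lower semicontinuous function is weakly lower
semicontinuous, and Opial's lemma then gives weak convergence.
-/

theorem tendsto_mul_zero_of_summable_sub_mul {w δ : ℕ → ℝ} (hw : Monotone w) (hδ : Antitone δ)
    (hδ0 : Tendsto δ atTop (𝓝 0)) (hsum : Summable fun k => (w (k + 1) - w k) * δ (k + 1)) :
    Tendsto (fun k => w k * δ k) atTop (𝓝 0) := by
  set c := fun k => (w (k + 1) - w k) * δ (k + 1) with hc_def
  have hδnn : ∀ k, 0 ≤ δ k := hδ.le_of_tendsto hδ0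
  have hc : ∀ k, 0 ≤ c k := fun k => mul_nonneg (sub_nonneg.2 (hw k.le_succ)) (hδnn _)
  have hinc : ∀ M n, (w (M + n) - w M) * δ (M + n) ≤ ∑ k ∈ Finset.range n, c (k + M) := by
    intro M n
    induction n with
    | zero => simp
    | succ n ih =>
      have hδle : (w (M + n) - w M) * δ (M + n + 1) ≤ (w (M + n) - w M) * δ (M + n) :=
        mul_le_mul_of_nonneg_left (hδ (M + n).le_succ) (sub_nonneg.2 (hw (M.le_add_right n)))
      rw [Finset.sum_range_succ, hc_def, add_comm n M, ← add_assoc]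
      linarith
  -- for `N ≥ M`, `w N * δ N ≤ w M * δ N + ∑' k, c (k + M)`, and both terms are eventually small
  have htail : ∀ M n, (w (M + n) - w M) * δ (M + n) ≤ ∑' k, c (k + M) := fun M n =>
    (hinc M n).trans (((summable_nat_add_iff M).2 hsum).sum_le_tsum _ fun k _ => hc _)
  refine tendsto_order.2 ⟨fun a ha => ?_, fun a ha => ?_⟩
  · filter_upwards [(tendsto_order.1 (by simpa using hδ0.const_mul (w 0))).1 a ha] with k hk
    exact hk.trans_le (mul_le_mul_of_nonneg_right (hw k.zero_le) (hδnn k))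
  · obtain ⟨M, hM⟩ := ((tendsto_order.1 (tendsto_sum_nat_add c)).2 (a / 2) (half_pos ha)).exists
    filter_upwards [(tendsto_order.1 (by simpa using hδ0.const_mul (w M))).2 (a / 2) (half_pos ha),
      eventually_ge_atTop M] with N hN hMN
    obtain ⟨n, rfl⟩ := Nat.exists_eq_add_of_le hMN
    linarith [htail M n]

section StepSize

variable {ε : ℝ} {s : ℕ → ℝ}

theorem le_stepSize_succ (hs : ∀ k, s (k + 1) = (ε + Real.sqrt (ε ^ 2 + 4 * s k ^ 2)) / 2)
    (k : ℕ) : ε ≤ s (k + 1) := by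
  have : ε ≤ Real.sqrt (ε ^ 2 + 4 * s k ^ 2) := Real.le_sqrt_of_sq_le (by nlinarith)
  rw [hs k]
  linarith

theorem stepSize_succ_sq (hs : ∀ k, s (k + 1) = (ε + Real.sqrt (ε ^ 2 + 4 * s k ^ 2)) / 2)
    (k : ℕ) : s (k + 1) ^ 2 = ε * s (k + 1) + s k ^ 2 := by
  have := Real.sq_sqrt (by positivity : 0 ≤ ε ^ 2 + 4 * s k ^ 2)
  rw [hs k]
  linear_combination this / 4

end StepSize

section WeakTopology

variable {E : Type*} [NormedAddCommGroup E] [NormedSpace ℝ E]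

theorem Convex.isClosed_toWeakSpace_image {s : Set E} (hs : Convex ℝ s) (hsc : IsClosed s) :
    IsClosed (toWeakSpace ℝ E '' s) := by
  rw [← hsc.closure_eq, hs.toWeakSpace_closure ℝ]
  exact isClosed_closure

theorem ConvexOn.le_of_mapClusterPt_toWeakSpace {f : E → ℝ} (hf : ConvexOn ℝ univ f)
    (hlsc : LowerSemicontinuous f) {ι : Type*} {l : Filter ι} {u : ι → E} {x : E}
    (hx : MapClusterPt (toWeakSpace ℝ E x) l (toWeakSpace ℝ E ∘ u)) {c : ℝ}
    (hc : ∀ᶠ i in l, f (u i) ≤ c) : f x ≤ c := by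
  have hclosed : IsClosed (toWeakSpace ℝ E '' {z | f z ≤ c}) := by
    refine Convex.isClosed_toWeakSpace_image ?_ (hlsc.isClosed_preimage c)
    simpa using hf.convex_le c
  obtain ⟨z, hz, hzx⟩ := hclosed.mem_of_mapClusterPt hx (hc.mono fun i hi => ⟨u i, hi, rfl⟩)
  exact (toWeakSpace ℝ E).injective hzx ▸ hz

theorem StrongDual.continuous_toWeakSpace_symm (ℓ : StrongDual ℝ E) :
    Continuous fun x : WeakSpace ℝ E => ℓ ((toWeakSpace ℝ E).symm x) :=
  WeakBilin.eval_continuous _ ℓ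

end WeakTopology

section Hilbert

variable {H : Type*} [NormedAddCommGroup H] [InnerProductSpace ℝ H]

theorem continuous_inner_toWeakSpace_symm (v : H) :
    Continuous fun x : WeakSpace ℝ H => ⟪(toWeakSpace ℝ H).symm x, v⟫ := by
  simpa only [innerSL_apply_apply, real_inner_comm v] using
    StrongDual.continuous_toWeakSpace_symm (innerSL ℝ v)

theorem Filter.Tendsto.inner_sub_toWeakSpace {ι : Type*} {l : Filter ι} {u : ι → H} {x : H}
    (hu : Tendsto (toWeakSpace ℝ H ∘ u) l (𝓝 (toWeakSpace ℝ H x))) (v : H) :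
    Tendsto (fun i => ⟪u i - x, v⟫) l (𝓝 0) := by
  have := ((continuous_inner_toWeakSpace_symm v).tendsto _).comp hu
  simp only [Function.comp_def, LinearEquiv.symm_apply_apply] at this
  simpa [inner_sub_left] using this.sub_const ⟪x, v⟫

theorem MapClusterPt.inner_toWeakSpace {ι : Type*} {l : Filter ι} {u : ι → H} {x : H}
    (hx : MapClusterPt (toWeakSpace ℝ H x) l (toWeakSpace ℝ H ∘ u)) (v : H) :
    MapClusterPt ⟪x, v⟫ l (fun i => ⟪u i, v⟫) := by
  simpa [Function.comp_def] using
    hx.continuousAt_comp (continuous_inner_toWeakSpace_symm v).continuousAt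

/-- Banach–Alaoglu, transported to `WeakSpace ℝ H` through the Riesz isomorphism. -/
theorem isCompact_toWeakSpace_closedBall [CompleteSpace H] (R : ℝ) :
    IsCompact (toWeakSpace ℝ H '' Metric.closedBall (0 : H) R) := by
  let D := InnerProductSpace.toDual ℝ H
  let g : WeakDual ℝ H → WeakSpace ℝ H :=
    fun ψ => toWeakSpace ℝ H (D.symm (WeakDual.toStrongDual ψ))
  have hg : Continuous g := by
    refine WeakBilin.continuous_of_continuous_eval _ fun ℓ => ?_
    have key : ∀ ψ : WeakDual ℝ H, ℓ (D.symm (WeakDual.toStrongDual ψ)) = ψ (D.symm ℓ) := by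
      intro ψ
      rw [← InnerProductSpace.toDual_symm_apply, real_inner_comm,
        InnerProductSpace.toDual_symm_apply]
      rfl
    exact (WeakDual.eval_continuous (D.symm ℓ)).congr fun ψ => (key ψ).symm
  refine ((WeakDual.isCompact_closedBall 0 R).image hg).of_isClosed_subset
    (Convex.isClosed_toWeakSpace_image (convex_closedBall 0 R) Metric.isClosed_closedBall) ?_
  rintro _ ⟨x, hx, rfl⟩
  refine ⟨StrongDual.toWeakDual (D x), ?_, ?_⟩
  · simpa [D] using hx
  · simp [g]

theorem eq_of_mapClusterPt_toWeakSpace {ι : Type*} {l : Filter ι} {u : ι → H} {p q : H}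
    {a b : ℝ} (hp : MapClusterPt (toWeakSpace ℝ H p) l (toWeakSpace ℝ H ∘ u))
    (hq : MapClusterPt (toWeakSpace ℝ H q) l (toWeakSpace ℝ H ∘ u))
    (ha : Tendsto (fun i => ‖u i - p‖) l (𝓝 a)) (hb : Tendsto (fun i => ‖u i - q‖) l (𝓝 b)) :
    p = q := by
  have hpolar : ∀ i, ⟪u i, p - q⟫ = (‖u i - q‖ ^ 2 - ‖u i - p‖ ^ 2 + ‖p‖ ^ 2 - ‖q‖ ^ 2) / 2 := by
    intro i
    rw [norm_sub_sq_real, norm_sub_sq_real, inner_sub_right]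
    ring
  have hlim : Tendsto (fun i => ⟪u i, p - q⟫) l
      (𝓝 ((b ^ 2 - a ^ 2 + ‖p‖ ^ 2 - ‖q‖ ^ 2) / 2)) := by
    simp only [hpolar]
    exact ((((hb.pow 2).sub (ha.pow 2)).add_const _).sub_const _).div_const 2
  have eq_lim : ∀ {x : H}, MapClusterPt (toWeakSpace ℝ H x) l (toWeakSpace ℝ H ∘ u) →
      ⟪x, p - q⟫ = (b ^ 2 - a ^ 2 + ‖p‖ ^ 2 - ‖q‖ ^ 2) / 2 := fun hx =>
    eq_of_nhds_neBot ((hx.inner_toWeakSpace (p - q)).neBot.mono (inf_le_inf_left _ hlim))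
  have hzero : ⟪p - q, p - q⟫ = 0 := by rw [inner_sub_left, eq_lim hp, eq_lim hq, sub_self]
  exact sub_eq_zero.1 (inner_self_eq_zero.1 hzero)

/-- Opial's lemma. -/
theorem exists_tendsto_toWeakSpace_of_tendsto_norm_sub [CompleteSpace H] {u : ℕ → H}
    {S : Set H} (hS : S.Nonempty)
    (hnorm : ∀ q ∈ S, ∃ a, Tendsto (fun k => ‖u k - q‖) atTop (𝓝 a))
    (hclust : ∀ x, MapClusterPt (toWeakSpace ℝ H x) atTop (toWeakSpace ℝ H ∘ u) → x ∈ S) :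
    ∃ x ∈ S, Tendsto (toWeakSpace ℝ H ∘ u) atTop (𝓝 (toWeakSpace ℝ H x)) := by
  obtain ⟨q, hq⟩ := hS
  obtain ⟨a, ha⟩ := hnorm q hq
  obtain ⟨R, hR⟩ := ha.bddAbove_range
  have hK := isCompact_toWeakSpace_closedBall (H := H) (R + ‖q‖)
  have hmem : ∀ᶠ k in atTop,
      (toWeakSpace ℝ H ∘ u) k ∈ toWeakSpace ℝ H '' Metric.closedBall 0 (R + ‖q‖) := by
    refine Eventually.of_forall fun k => ⟨u k, ?_, rfl⟩
    have := hR ⟨k, rfl⟩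
    simp only [mem_closedBall_zero_iff]
    linarith [norm_le_norm_sub_add (u k) q]
  obtain ⟨_, ⟨x, -, rfl⟩, hx⟩ := hK.exists_mapClusterPt_of_frequently hmem.frequently
  refine ⟨x, hclust x hx, hK.tendsto_nhds_of_unique_mapClusterPt hmem ?_⟩
  rintro _ ⟨p, -, rfl⟩ hp
  obtain ⟨b, hb⟩ := hnorm p (hclust p hp)
  obtain ⟨c, hc⟩ := hnorm x (hclust x hx)
  rw [eq_of_mapClusterPt_toWeakSpace hp hx hb hc]

/-- The implicit step `y (k+1) = prox_{γ (k+1) f} (y k)`, written with a subgradient `η (k+1)` of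
`f` at `y (k+1)`. -/
structure IsProximalSequence (f : H → ℝ) (γ : ℕ → ℝ) (y η : ℕ → H) : Prop where
  subgradient : ∀ k z, f (y (k + 1)) + ⟪η (k + 1), z - y (k + 1)⟫ ≤ f z
  step : ∀ k, y (k + 1) = y k - γ (k + 1) • η (k + 1)

namespace IsProximalSequence

variable {f : H → ℝ} {γ : ℕ → ℝ} {y η : ℕ → H}

theorem norm_sub_sq_add_le (hp : IsProximalSequence f γ y η) {k : ℕ} (hγ : 0 ≤ γ (k + 1))
    (x : H) : ‖y (k + 1) - x‖ ^ 2 + 2 * γ (k + 1) * (f (y (k + 1)) - f x) ≤ ‖y k - x‖ ^ 2 := by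
  have hsg : f (y (k + 1)) - f x ≤ ⟪y (k + 1) - x, η (k + 1)⟫ := by
    have := hp.subgradient k x
    rw [← neg_sub (y (k + 1)) x, inner_neg_right, real_inner_comm] at this
    linarith
  have hexpand : ‖y k - x‖ ^ 2 = ‖y (k + 1) - x‖ ^ 2
      + 2 * γ (k + 1) * ⟪y (k + 1) - x, η (k + 1)⟫ + γ (k + 1) ^ 2 * ‖η (k + 1)‖ ^ 2 := by
    rw [show y k - x = (y (k + 1) - x) + γ (k + 1) • η (k + 1) by rw [hp.step k]; abel,
      norm_add_sq_real, real_inner_smul_right, norm_smul, Real.norm_eq_abs, mul_pow, sq_abs]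
    ring
  nlinarith [mul_le_mul_of_nonneg_left hsg (by positivity : (0 : ℝ) ≤ 2 * γ (k + 1))]

theorem apply_succ_le (hp : IsProximalSequence f γ y η) {k : ℕ} (hγ : 0 ≤ γ (k + 1)) :
    f (y (k + 1)) ≤ f (y k) := by
  have := hp.subgradient k (y k)
  rw [show y k - y (k + 1) = γ (k + 1) • η (k + 1) by rw [hp.step k]; abel,
    real_inner_smul_right, real_inner_self_eq_norm_sq] at this
  nlinarith [mul_nonneg hγ (sq_nonneg ‖η (k + 1)‖)]

theorem antitone_apply (hp : IsProximalSequence f γ y η) (hγ : ∀ k, 0 ≤ γ (k + 1)) :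
    Antitone fun k => f (y k) :=
  antitone_nat_of_succ_le fun k => hp.apply_succ_le (hγ k)

theorem sum_le (hp : IsProximalSequence f γ y η) (hγ : ∀ k, 0 ≤ γ (k + 1)) (x : H) (N : ℕ) :
    ∑ k ∈ Finset.range N, 2 * γ (k + 1) * (f (y (k + 1)) - f x) ≤ ‖y 0 - x‖ ^ 2 :=
  calc ∑ k ∈ Finset.range N, 2 * γ (k + 1) * (f (y (k + 1)) - f x)
      ≤ ∑ k ∈ Finset.range N, (‖y k - x‖ ^ 2 - ‖y (k + 1) - x‖ ^ 2) :=
        Finset.sum_le_sum fun k _ => by linarith [hp.norm_sub_sq_add_le (hγ k) x]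
    _ = ‖y 0 - x‖ ^ 2 - ‖y N - x‖ ^ 2 := Finset.sum_range_sub' _ _
    _ ≤ ‖y 0 - x‖ ^ 2 := sub_le_self _ (sq_nonneg _)

theorem antitone_norm_sub (hp : IsProximalSequence f γ y η) (hγ : ∀ k, 0 ≤ γ (k + 1)) {x : H}
    (hx : ∀ z, f x ≤ f z) : Antitone fun k => ‖y k - x‖ := by
  refine antitone_nat_of_succ_le fun k => ?_
  have := hp.norm_sub_sq_add_le (hγ k) x
  have := mul_nonneg (hγ k) (sub_nonneg.2 (hx (y (k + 1))))
  exact pow_le_pow_iff_left₀ (norm_nonneg _) (norm_nonneg _) two_ne_zero |>.1 (by linarith)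

theorem summable_mul_sub (hp : IsProximalSequence f γ y η) (hγ : ∀ k, 0 ≤ γ (k + 1)) {x : H}
    (hx : ∀ z, f x ≤ f z) : Summable fun k => γ (k + 1) * (f (y (k + 1)) - f x) := by
  refine summable_of_sum_range_le (c := ‖y 0 - x‖ ^ 2 / 2)
    (fun k => mul_nonneg (hγ k) (sub_nonneg.2 (hx _))) fun N => ?_
  have := hp.sum_le hγ x N
  simp only [mul_assoc, ← Finset.mul_sum] at this
  linarith

theorem tendsto_apply (hp : IsProximalSequence f γ y η) {c : ℝ} (hc : 0 < c)
    (hγ : ∀ k, c ≤ γ (k + 1)) {x : H} (hx : ∀ z, f x ≤ f z) :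
    Tendsto (fun k => f (y k)) atTop (𝓝 (f x)) := by
  have hγ0 : ∀ k, 0 ≤ γ (k + 1) := fun k => hc.le.trans (hγ k)
  have hsum : Summable fun k => f (y (k + 1)) - f x := by
    refine .of_nonneg_of_le (fun k => sub_nonneg.2 (hx _)) (fun k => ?_)
      ((hp.summable_mul_sub hγ0 hx).div_const c)
    rw [le_div_iff₀ hc, mul_comm]
    exact mul_le_mul_of_nonneg_right (hγ k) (sub_nonneg.2 (hx _))
  have := (tendsto_add_atTop_iff_nat (f := fun k => f (y k) - f x) 1).1 hsum.tendsto_atTop_zero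
  simpa using this.add_const (f x)

theorem isMinimizer_of_mapClusterPt (hp : IsProximalSequence f γ y η) (hf : ConvexOn ℝ univ f)
    (hlsc : LowerSemicontinuous f) {c : ℝ} (hc : 0 < c) (hγ : ∀ k, c ≤ γ (k + 1)) {x : H}
    (hx : ∀ z, f x ≤ f z) {p : H}
    (hpc : MapClusterPt (toWeakSpace ℝ H p) atTop (toWeakSpace ℝ H ∘ y)) (z : H) :
    f p ≤ f z := by
  refine (le_of_forall_gt_imp_ge_of_dense fun b hb => ?_).trans (hx z)
  exact hf.le_of_mapClusterPt_toWeakSpace hlsc hpc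
    (((tendsto_order.1 (hp.tendsto_apply hc hγ hx)).2 b hb).mono fun _ => le_of_lt)

theorem exists_tendsto_toWeakSpace [CompleteSpace H] (hp : IsProximalSequence f γ y η)
    (hf : ConvexOn ℝ univ f) (hlsc : LowerSemicontinuous f) {c : ℝ} (hc : 0 < c)
    (hγ : ∀ k, c ≤ γ (k + 1)) (hmin : ∃ x, ∀ z, f x ≤ f z) :
    ∃ x, (∀ z, f x ≤ f z) ∧ Tendsto (toWeakSpace ℝ H ∘ y) atTop (𝓝 (toWeakSpace ℝ H x)) := by
  obtain ⟨x, hx⟩ := hmin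
  have hγ0 : ∀ k, 0 ≤ γ (k + 1) := fun k => hc.le.trans (hγ k)
  exact exists_tendsto_toWeakSpace_of_tendsto_norm_sub (S := {p | ∀ z, f p ≤ f z}) ⟨x, hx⟩
    (fun q hq => ⟨_, tendsto_atTop_ciInf (hp.antitone_norm_sub hγ0 hq)
      ⟨0, forall_mem_range.2 fun k => norm_nonneg _⟩⟩)
    (fun p hpc => hp.isMinimizer_of_mapClusterPt hf hlsc hc hγ hx hpc)

theorem tendsto_stepSize_sq_mul_sub {ε : ℝ} (hε : 0 < ε) {s : ℕ → ℝ}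
    (hs : ∀ k, s (k + 1) = (ε + Real.sqrt (ε ^ 2 + 4 * s k ^ 2)) / 2)
    (hp : IsProximalSequence f (fun k => s k / ε) y η) {x : H} (hx : ∀ z, f x ≤ f z) :
    Tendsto (fun k => s k ^ 2 * (f (y k) - f x)) atTop (𝓝 0) := by
  have hγ : ∀ k, 1 ≤ s (k + 1) / ε := fun k => (one_le_div hε).2 (le_stepSize_succ hs k)
  have hγ0 : ∀ k, 0 ≤ s (k + 1) / ε := fun k => zero_le_one.trans (hγ k)
  refine tendsto_mul_zero_of_summable_sub_mul
    (monotone_nat_of_le_succ fun k => ?_)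
    (fun a b hab => sub_le_sub_right (hp.antitone_apply hγ0 hab) _)
    (by simpa using (hp.tendsto_apply one_pos hγ hx).sub_const (f x)) ?_
  · nlinarith [stepSize_succ_sq hs k, le_stepSize_succ hs k]
  · -- `s (k+1)² - s k² = ε s (k+1) = ε² γ (k+1)`
    refine ((hp.summable_mul_sub hγ0 hx).mul_left (ε ^ 2)).congr fun k => ?_
    rw [stepSize_succ_sq hs k]
    field_simp
    ring

end IsProximalSequence

end Hilbert

theorem proximal_algorithm_value_rate_and_weak_convergence_general
    {H : Type*} [NormedAddCommGroup H] [InnerProductSpace ℝ H] [CompleteSpace H]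
    (f : H → ℝ)
    (hconv : ConvexOn ℝ Set.univ f)
    (hlsc : LowerSemicontinuous f)
    (hmin : ∃ z, ∀ y, f z ≤ f y)
    (α : ℝ) (hα : 1 < α)
    (s : ℕ → ℝ)
    (hsrec : ∀ k, s (k + 1)
      = (α - 1 + Real.sqrt ((α - 1) ^ 2 + 4 * (s k) ^ 2)) / 2)
    (y η : ℕ → H)
    (hsub : ∀ k, ∀ z : H, f (y (k + 1)) + ⟪η (k + 1), z - y (k + 1)⟫ ≤ f z)
    (hstep : ∀ k, y (k + 1) = y k - (s (k + 1) / (α - 1)) • η (k + 1)) :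
    Tendsto (fun k => (s k) ^ 2 * (f (y k) - ⨅ v, f v)) atTop (nhds 0) ∧
    ∃ xstar : H, (∀ v, f xstar ≤ f v) ∧
      ∀ v : H, Tendsto (fun k => ⟪y k - xstar, v⟫) atTop (nhds 0) := by
  obtain ⟨x, hx⟩ := hmin
  have hε : 0 < α - 1 := sub_pos.2 hα
  have hp : IsProximalSequence f (fun k => s k / (α - 1)) y η := ⟨hsub, hstep⟩
  have hγ : ∀ k, 1 ≤ s (k + 1) / (α - 1) := fun k => (one_le_div hε).2 (le_stepSize_succ hsrec k)
  have hinf : ⨅ v, f v = f x :=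
    le_antisymm (ciInf_le ⟨f x, forall_mem_range.2 hx⟩ x) (le_ciInf hx)
  obtain ⟨xstar, hxstar, hweak⟩ := hp.exists_tendsto_toWeakSpace hconv hlsc one_pos hγ ⟨x, hx⟩
  exact ⟨hinf ▸ hp.tendsto_stepSize_sq_mul_sub hε hsrec hx, xstar, hxstar,
    hweak.inner_sub_toWeakSpace⟩

/-- Proximal algorithm for nonsmooth convex minimization: o(1/s_k²) convergence of the
values and weak convergence of the iterates towards a minimizer of `f`. -/
theorem proximal_algorithm_value_rate_and_weak_convergence
    {H : Type*} [NormedAddCommGroup H] [InnerProductSpace ℝ H] [CompleteSpace H]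
    (f : H → ℝ)
    (hconv : ConvexOn ℝ Set.univ f)
    (hlsc : LowerSemicontinuous f)
    (hmin : ∃ z, ∀ y, f z ≤ f y)
    (α : ℝ) (hα : 1 < α)
    (s : ℕ → ℝ) (hs0 : s 0 = 0)
    (hsrec : ∀ k, s (k + 1)
      = (α - 1 + Real.sqrt ((α - 1) ^ 2 + 4 * (s k) ^ 2)) / 2)
    (y η : ℕ → H)
    (hsub : ∀ k, ∀ z : H, f (y (k + 1)) + ⟪η (k + 1), z - y (k + 1)⟫ ≤ f z)
    (hstep : ∀ k, y (k + 1) = y k - (s (k + 1) / (α - 1)) • η (k + 1)) :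
    Tendsto (fun k => (s k) ^ 2 * (f (y k) - ⨅ v, f v)) atTop (nhds 0) ∧
    ∃ xstar : H, (∀ v, f xstar ≤ f v) ∧
      ∀ v : H, Tendsto (fun k => ⟪y k - xstar, v⟫) atTop (nhds 0) :=
  proximal_algorithm_value_rate_and_weak_convergence_general f hconv hlsc hmin α hα s hsrec y η hsub
    hstep
end
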